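/- arXiv:1811.02399 — 9 statements merged into one kernel-verified Lean document; each statement's English description precedes it below -/
import Mathlib

section
/- Let E be a complex Banach space and let F be a closed linear subspace of E such that the quotient space E/F is separable. Then there exists a bounded linear operator T : E → E such that ker T = F. -/
/-!
If `E ⧸ F` is finite-dimensional, a linear section of the quotient map is continuous and
injective. Otherwise `E` is infinite-dimensional, so it carries unit vectors `eₙ` and functionals
`φₙ` with `φₙ eₙ = 1` and `φₘ eₙ = 0` for `m < n` (choose `eₙ` in the common kernel of the earlier
`φₘ`). With norm-one functionals `fₙ` separating the points of the separable space `E ⧸ F`, the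
operator `S y = ∑ 2⁻ⁿ fₙ(y) eₙ` is injective, because the triangular system `φₖ (S y) = 0` forces
`fₙ y = 0` by induction on `n`. Then `S ∘ (E → E ⧸ F)` has kernel `F`.
-/

open TopologicalSpace

section

variable {𝕜 : Type*} [RCLike 𝕜]

theorem exists_seq_norm_le_one_separating (X : Type*) [NormedAddCommGroup X] [NormedSpace 𝕜 X]
    [SeparableSpace X] :
    ∃ f : ℕ → StrongDual 𝕜 X, (∀ n, ‖f n‖ ≤ 1) ∧ ∀ y, (∀ n, f n y = 0) → y = 0 := by
  choose f hf_norm hf_eq using fun n ↦ exists_dual_vector'' 𝕜 (denseSeq X n)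
  refine ⟨f, hf_norm, fun y hy ↦ norm_le_zero_iff.1 ?_⟩
  -- For `u` in the dense sequence, `‖u‖ = ‖f u‖ = ‖f (u - y)‖ ≤ ‖u - y‖`, so `‖y‖ ≤ 2 ‖y - u‖`.
  have key : ‖y‖ ≤ 2 * ‖y - y‖ := by
    refine (denseRange_denseSeq X).induction_on (p := fun u ↦ ‖y‖ ≤ 2 * ‖y - u‖) y
      (isClosed_le continuous_const (by fun_prop)) fun n ↦ ?_
    have h : ‖denseSeq X n‖ ≤ ‖denseSeq X n - y‖ := by
      calc ‖denseSeq X n‖ = ‖f n (denseSeq X n - y)‖ := by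
            rw [map_sub, hy, sub_zero, hf_eq, RCLike.norm_ofReal, abs_norm]
        _ ≤ ‖f n‖ * ‖denseSeq X n - y‖ := (f n).le_opNorm _
        _ ≤ ‖denseSeq X n - y‖ := mul_le_of_le_one_left (norm_nonneg _) (hf_norm n)
    linarith [norm_le_insert' y (denseSeq X n), norm_sub_rev y (denseSeq X n)]
  simpa using key

theorem Module.exists_ne_zero_forall_eq_zero_of_not_finite {K V ι : Type*} [Field K]
    [AddCommGroup V] [Module K V] [Finite ι] (hV : ¬Module.Finite K V) (ψ : ι → V →ₗ[K] K) :
    ∃ x ≠ 0, ∀ i, ψ i x = 0 := by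
  have hΨ : ¬Function.Injective (LinearMap.pi ψ) := fun h ↦ hV (.of_injective _ h)
  obtain ⟨x, hx, hx0⟩ : ∃ x, LinearMap.pi ψ x = 0 ∧ x ≠ 0 := by
    simpa [injective_iff_map_eq_zero] using hΨ
  exact ⟨x, hx0, fun i ↦ congrFun hx i⟩

variable {E : Type*} [NormedAddCommGroup E] [NormedSpace 𝕜 E]

theorem exists_triangular_seq_of_not_finiteDimensional (hE : ¬FiniteDimensional 𝕜 E) :
    ∃ (e : ℕ → E) (φ : ℕ → StrongDual 𝕜 E),
      (∀ n, ‖e n‖ = 1) ∧ (∀ n, φ n (e n) = 1) ∧ ∀ m n, m < n → φ m (e n) = 0 := by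
  obtain ⟨p, hp, hp_tri⟩ := exists_seq_of_forall_finset_exists
    (fun p : E × StrongDual 𝕜 E ↦ ‖p.1‖ = 1 ∧ p.2 p.1 = 1) (fun p q ↦ p.2 q.1 = 0) fun s _ ↦ by
      obtain ⟨x, hx0, hx⟩ := Module.exists_ne_zero_forall_eq_zero_of_not_finite hE
        fun q : s ↦ (q.1.2 : E →ₗ[𝕜] 𝕜)
      have he : ‖(‖x‖⁻¹ : 𝕜) • x‖ = 1 := norm_smul_inv_norm hx0
      obtain ⟨φ, -, hφ⟩ := exists_dual_vector 𝕜 _ (he.symm ▸ one_ne_zero)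
      refine ⟨((‖x‖⁻¹ : 𝕜) • x, φ), ⟨he, by simp [hφ, he]⟩, fun q hq ↦ ?_⟩
      have hqx : q.2 x = 0 := hx ⟨q, hq⟩
      simp [hqx]
  exact ⟨fun n ↦ (p n).1, fun n ↦ (p n).2, fun n ↦ (hp n).1, fun n ↦ (hp n).2, hp_tri⟩

end

theorem eq_zero_of_hasSum_triangular {R : Type*} [Semiring R] [TopologicalSpace R] [T2Space R]
    {M : ℕ → ℕ → R} (hdiag : ∀ n, M n n = 1) (htri : ∀ m n, m < n → M m n = 0) {a : ℕ → R}
    (ha : ∀ k, HasSum (fun n ↦ M k n * a n) 0) (k : ℕ) : a k = 0 := by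
  induction k using Nat.strong_induction_on with
  | _ k ih =>
    have h_single : HasSum (fun n ↦ M k n * a n) (M k k * a k) := by
      refine hasSum_single k fun n hn ↦ ?_
      rcases hn.lt_or_gt with hlt | hgt
      · rw [ih n hlt, mul_zero]
      · rw [htri k n hgt, zero_mul]
    simpa [hdiag] using h_single.unique (ha k)

theorem exists_injective_continuousLinearMap_of_separableSpace {𝕜 X E : Type*} [RCLike 𝕜]
    [NormedAddCommGroup X] [NormedSpace 𝕜 X] [SeparableSpace X]
    [NormedAddCommGroup E] [NormedSpace 𝕜 E] [CompleteSpace E] (hE : ¬FiniteDimensional 𝕜 E) :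
    ∃ T : X →L[𝕜] E, Function.Injective T := by
  obtain ⟨f, hf_norm, hf_sep⟩ := exists_seq_norm_le_one_separating (𝕜 := 𝕜) X
  obtain ⟨e, φ, he, hφe, hφ_tri⟩ := exists_triangular_seq_of_not_finiteDimensional hE
  set u : ℕ → X →L[𝕜] E := fun n ↦ (2⁻¹ : 𝕜) ^ n • (f n).smulRight (e n)
  have hu : Summable u := by
    refine .of_norm_bounded summable_geometric_two fun n ↦ ?_
    calc ‖u n‖ = (1 / 2) ^ n * (‖f n‖ * ‖e n‖) := by
          simp [u, norm_smul, ContinuousLinearMap.norm_smulRight_apply]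
      _ ≤ (1 / 2) ^ n := by
          rw [he, mul_one]
          exact mul_le_of_le_one_right (by positivity) (hf_norm n)
  refine ⟨∑' n, u n, (injective_iff_map_eq_zero _).2 fun y hy ↦ hf_sep y fun n ↦ ?_⟩
  have hcoord (k : ℕ) : HasSum (fun n ↦ φ k (e n) * ((2⁻¹ : 𝕜) ^ n * f n y)) 0 := by
    have h := ((hu.hasSum.mapL (ContinuousLinearMap.apply 𝕜 E y)).mapL (φ k))
    simp only [ContinuousLinearMap.apply_apply, hy, map_zero] at h
    refine h.congr_fun fun n ↦ ?_
    simp only [u, smul_apply, ContinuousLinearMap.smulRight_apply, map_smul, smul_eq_mul]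
    ring
  simpa using eq_zero_of_hasSum_triangular hφe hφ_tri hcoord n

/-- **Proposition 2.0.** Let `E` be a complex Banach space and let `F` be a closed linear
subspace of `E` such that the quotient space `E/F` is separable. Then there exists a bounded
linear operator `T : E → E` such that `ker T = F`. -/
theorem kernel_of_separable_quotient
    (E : Type*) [NormedAddCommGroup E] [NormedSpace ℂ E] [CompleteSpace E]
    (F : Submodule ℂ E) (hF : IsClosed (F : Set E))
    (hsep : TopologicalSpace.SeparableSpace (E ⧸ F)) :
    ∃ T : E →L[ℂ] E, LinearMap.ker (T : E →ₗ[ℂ] E) = F := by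
  have : IsClosed (F : Set E) := hF -- makes `E ⧸ F` a normed space
  suffices ∃ S : E ⧸ F →L[ℂ] E, Function.Injective S by
    obtain ⟨S, hS⟩ := this
    exact ⟨S.comp F.mkQL,
      (LinearMap.ker_comp_of_ker_eq_bot F.mkQ (LinearMap.ker_eq_bot.2 hS)).trans F.ker_mkQ⟩
  by_cases hfin : FiniteDimensional ℂ (E ⧸ F)
  · obtain ⟨j, hj⟩ := F.mkQ.exists_rightInverse_of_surjective F.range_mkQ
    exact ⟨LinearMap.toContinuousLinearMap j, Function.LeftInverse.injective (g := F.mkQ)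
      (LinearMap.congr_fun hj)⟩
  · exact exists_injective_continuousLinearMap_of_separableSpace fun _ ↦ hfin inferInstance
end

section
/- Let E be a separable complex Banach space. Then every closed linear subspace F of E is the kernel of some bounded linear operator T : E → E. -/
/-!
Since `F` is closed, `E ⧸ F` is a separable normed space, and it suffices to find an injective
bounded operator `J : E ⧸ F → E`: then `T = J ∘ π` has kernel `F`. If `E ⧸ F` is
finite-dimensional, any linear section of `π` will do. Otherwise `E` is infinite-dimensional, so
it carries a triangular system `(yₙ, φₙ)` with `‖yₙ‖ = 1`, `φₙ yₙ = 1` and `φₘ yₙ = 0` for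
`m < n`. If `gₙ` are functionals of norm at most `2⁻ⁿ` separating the points of `E ⧸ F` (they
exist by separability), then `J q = ∑ gₙ(q) yₙ` is injective: applying `φₘ` to `J q = 0` gives
`gₘ q = 0` by strong induction on `m`.
-/

open Function TopologicalSpace

theorem Module.exists_ne_zero_forall_apply_eq_zero {K V ι : Type*} [Field K] [AddCommGroup V]
    [Module K V] [Finite ι] (hV : ¬ FiniteDimensional K V) (f : ι → Module.Dual K V) :
    ∃ v ≠ 0, ∀ i, f i v = 0 := by
  by_contra! h
  refine hV (Module.Finite.of_injective (LinearMap.pi f) ?_)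
  rw [← LinearMap.ker_eq_bot, LinearMap.ker_eq_bot']
  intro v hv
  by_contra hv0
  obtain ⟨i, hi⟩ := h v hv0
  exact hi (congr_fun hv i)

section

variable {𝕜 E Q : Type*} [RCLike 𝕜] [NormedAddCommGroup E] [NormedSpace 𝕜 E]
  [NormedAddCommGroup Q] [NormedSpace 𝕜 Q]

variable (𝕜 Q) in
theorem exists_separating_seq_strongDual [SeparableSpace Q] :
    ∃ g : ℕ → StrongDual 𝕜 Q, (∀ n, ‖g n‖ ≤ 1) ∧ ∀ q, (∀ n, g n q = 0) → q = 0 := by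
  choose g hg_norm hg_apply using fun n => exists_dual_vector'' 𝕜 (denseSeq Q n)
  refine ⟨g, hg_norm, fun q hq => norm_le_zero_iff.mp ?_⟩
  -- `g n` norms `denseSeq Q n` and kills `q`, so `‖d‖ ≤ ‖d - q‖` on a dense set, hence at `d = q`.
  have key : ∀ x : Q, ‖x‖ ≤ ‖x - q‖ := fun x =>
    (denseRange_denseSeq Q).induction_on x (isClosed_le (by fun_prop) (by fun_prop)) fun n =>
      calc ‖denseSeq Q n‖ = ‖g n (denseSeq Q n - q)‖ := by simp [hg_apply, hq]
        _ ≤ 1 * ‖denseSeq Q n - q‖ := (g n).le_of_opNorm_le (hg_norm n) _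
        _ = ‖denseSeq Q n - q‖ := one_mul _
  simpa using key q

variable (𝕜 E) in
theorem exists_triangular_system (hE : ¬ FiniteDimensional 𝕜 E) :
    ∃ (y : ℕ → E) (φ : ℕ → StrongDual 𝕜 E), (∀ n, ‖y n‖ = 1) ∧ (∀ n, φ n (y n) = 1) ∧
      ∀ m n, m < n → φ m (y n) = 0 := by
  obtain ⟨p, hp, htri⟩ := exists_seq_of_forall_finset_exists
    (fun p : E × StrongDual 𝕜 E => ‖p.1‖ = 1 ∧ p.2 p.1 = 1) (fun p p' => p.2 p'.1 = 0)
    fun s _ => by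
      obtain ⟨z, hz, hzs⟩ := Module.exists_ne_zero_forall_apply_eq_zero hE
        fun p : s => (p.1.2 : Module.Dual 𝕜 E)
      set y := (‖z‖⁻¹ : 𝕜) • z
      have hy : ‖y‖ = 1 := by simp [y, norm_smul, hz]
      obtain ⟨φ, -, hφ⟩ := exists_dual_vector 𝕜 y (by simp [hy])
      refine ⟨(y, φ), ⟨hy, by simp [hφ, hy]⟩, fun p hp => ?_⟩
      simp [y, show p.2 z = 0 from hzs ⟨p, hp⟩]
  exact ⟨fun n => (p n).1, fun n => (p n).2, fun n => (hp n).1, fun n => (hp n).2, htri⟩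

section TriangularSum

variable [CompleteSpace E] {y : ℕ → E} {g : ℕ → StrongDual 𝕜 Q}

theorem summable_smulRight_of_norm_eq_one (hy : ∀ n, ‖y n‖ = 1) (hg : Summable fun n => ‖g n‖) :
    Summable fun n => (g n).smulRight (y n) :=
  hg.of_norm_bounded fun n => by rw [ContinuousLinearMap.norm_smulRight_apply, hy, mul_one]

theorem injective_tsum_smulRight {φ : ℕ → StrongDual 𝕜 E} (hy : ∀ n, ‖y n‖ = 1)
    (hφy : ∀ n, φ n (y n) = 1) (htri : ∀ m n, m < n → φ m (y n) = 0)
    (hg : Summable fun n => ‖g n‖) (hsep : ∀ q, (∀ n, g n q = 0) → q = 0) :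
    Injective (∑' n, (g n).smulRight (y n) : Q →L[𝕜] E) := by
  have hsum := summable_smulRight_of_norm_eq_one hy hg
  refine (injective_iff_map_eq_zero (∑' n, (g n).smulRight (y n))).mpr fun q hq =>
    hsep q fun m => ?_
  induction m using Nat.strong_induction_on with
  | _ m ih =>
    -- `φ m` kills the terms with `n > m`, the induction hypothesis those with `n < m`.
    have hφ : φ m ((∑' n, (g n).smulRight (y n)) q) = ∑' n, g n q * φ m (y n) := by
      rw [← ContinuousLinearMap.apply_apply q, ContinuousLinearMap.map_tsum _ hsum,
        ContinuousLinearMap.map_tsum _ (hsum.mapL _)]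
      simp
    rw [hq, map_zero, tsum_eq_single m fun n hn => ?_, hφy, mul_one] at hφ
    · exact hφ.symm
    · rcases hn.lt_or_gt with h | h
      · simp [ih n h]
      · simp [htri m n h]

end TriangularSum

variable (Q) in
theorem exists_injective_of_separableSpace [SeparableSpace Q] [CompleteSpace E]
    (hE : ¬ FiniteDimensional 𝕜 E) : ∃ J : Q →L[𝕜] E, Injective J := by
  obtain ⟨g, hg_norm, hsep⟩ := exists_separating_seq_strongDual 𝕜 Q
  obtain ⟨y, φ, hy, hφy, htri⟩ := exists_triangular_system 𝕜 E hE
  have hg_summable : Summable fun n => ‖(2⁻¹ : 𝕜) ^ n • g n‖ :=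
    summable_geometric_two.of_nonneg_of_le (fun _ => norm_nonneg _) fun n => by
      rw [norm_smul, norm_pow, norm_inv, RCLike.norm_two, one_div, inv_pow]
      exact mul_le_of_le_one_right (by positivity) (hg_norm n)
  refine ⟨_, injective_tsum_smulRight hy hφy htri hg_summable fun q hq => hsep q fun n => ?_⟩
  simpa using hq n

theorem Submodule.exists_injective_quotient_of_finiteDimensional (F : Submodule 𝕜 E)
    [IsClosed (F : Set E)] [FiniteDimensional 𝕜 (E ⧸ F)] :
    ∃ J : (E ⧸ F) →L[𝕜] E, Injective J := by
  obtain ⟨j, hj⟩ := F.mkQ.exists_rightInverse_of_surjective F.range_mkQ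
  exact ⟨LinearMap.toContinuousLinearMap j,
    HasLeftInverse.injective ⟨F.mkQ, LinearMap.congr_fun hj⟩⟩

theorem Submodule.exists_injective_quotient [CompleteSpace E] [SeparableSpace E]
    (F : Submodule 𝕜 E) [IsClosed (F : Set E)] : ∃ J : (E ⧸ F) →L[𝕜] E, Injective J := by
  by_cases hQ : FiniteDimensional 𝕜 (E ⧸ F)
  · exact F.exists_injective_quotient_of_finiteDimensional
  · have : SeparableSpace (E ⧸ F) := F.mkQ_surjective.denseRange.separableSpace F.mkQL.continuous
    exact exists_injective_of_separableSpace (E ⧸ F) fun hE => hQ inferInstance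

end

/-- Let `E` be a separable complex Banach space. Then every closed linear subspace `F` of `E`
is the kernel of some bounded linear operator `T : E → E`. -/
theorem every_closed_subspace_is_kernel_of_separable
    (E : Type*) [NormedAddCommGroup E] [NormedSpace ℂ E] [CompleteSpace E]
    [TopologicalSpace.SeparableSpace E]
    (F : Submodule ℂ E) (hF : IsClosed (F : Set E)) :
    ∃ T : E →L[ℂ] E, LinearMap.ker (T : E →ₗ[ℂ] E) = F := by
  have : IsClosed (F : Set E) := hF
  obtain ⟨J, hJ⟩ := F.exists_injective_quotient
  refine ⟨J.comp F.mkQL, ?_⟩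
  rw [ContinuousLinearMap.toLinearMap_comp,
    LinearMap.ker_comp_of_ker_eq_bot _ (LinearMap.ker_eq_bot_of_injective hJ),
    Submodule.toLinearMap_mkQL, Submodule.ker_mkQ]
end

section
/- Let E be a complex Banach space containing an uncountable biorthogonal system, i.e. there exist an uncountable index set Γ and families (x_γ)_{γ∈Γ} in E and (λ_γ)_{γ∈Γ} in the continuous dual E' such that λ_β(x_α) = 1 if α = β and λ_β(x_α) = 0 if α ≠ β. Then E contains a closed linear subspace F such that both F and the quotient E/F are non-separable. -/
/-!
Split `Γ` into two disjoint uncountable pieces `A` and `B` and let `F` be the closed linear span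
of `{x_α : α ∈ A}`. The system restricts to a biorthogonal system of `F` indexed by `A`, and,
since every `λ_β` with `β ∈ B` vanishes on `F`, it descends to a biorthogonal system of `E ⧸ F`
indexed by `B`. A normed space carrying an uncountable biorthogonal system is not separable:
uncountably many of the functionals share a norm bound `n`, and the corresponding vectors are then
pairwise at distance at least `1 / n`.
-/

open TopologicalSpace

theorem Metric.countable_of_pairwise_le_dist {X ι : Type*} [PseudoMetricSpace X]
    [SeparableSpace X] {ε : ℝ} (hε : 0 < ε) {f : ι → X}
    (hf : Pairwise fun i j => ε ≤ dist (f i) (f j)) : Countable ι := by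
  let _ : UniformSpace ι := ⊥
  have : DiscreteTopology ι := discreteTopology_bot ι
  exact separableSpace_iff_countable.1
    (isUniformEmbedding_bot_of_pairwise_le_dist hε hf).isEmbedding.separableSpace

theorem Infinite.nonempty_sum_self_embedding (α : Type*) [Infinite α] :
    Nonempty (α ⊕ α ↪ α) := by
  rw [← Cardinal.le_def, Cardinal.mk_sum, Cardinal.lift_id,
    Cardinal.add_eq_self (Cardinal.aleph0_le_mk α)]

theorem exists_uncountable_le_natCast {ι : Type*} [Uncountable ι] (f : ι → ℝ) :
    ∃ n : ℕ, Uncountable {i // f i ≤ n} := by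
  by_contra! h
  have hcover : (⋃ n : ℕ, {i | f i ≤ n}) = Set.univ :=
    Set.eq_univ_of_forall fun i => Set.mem_iUnion.2 (exists_nat_ge (f i))
  exact not_countable (α := ι) <| Set.countable_univ_iff.1 <|
    hcover ▸ Set.countable_iUnion fun n => Set.countable_coe_iff.1 (h n)

structure IsBiorthogonal {𝕜 V ι : Type*} [NontriviallyNormedField 𝕜] [SeminormedAddCommGroup V]
    [NormedSpace 𝕜 V] (x : ι → V) (μ : ι → V →L[𝕜] 𝕜) : Prop where
  apply_self : ∀ i, μ i (x i) = 1
  apply_of_ne : ∀ i j, i ≠ j → μ j (x i) = 0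

namespace IsBiorthogonal

variable {𝕜 V ι : Type*} [NontriviallyNormedField 𝕜] [SeminormedAddCommGroup V]
  [NormedSpace 𝕜 V] {x : ι → V} {μ : ι → V →L[𝕜] 𝕜}

theorem comp (h : IsBiorthogonal x μ) {κ : Type*} {e : κ → ι} (he : Function.Injective e) :
    IsBiorthogonal (x ∘ e) (μ ∘ e) :=
  ⟨fun i => h.apply_self (e i), fun _ _ hij => h.apply_of_ne _ _ (he.ne hij)⟩

theorem restrict (h : IsBiorthogonal x μ) (F : Submodule 𝕜 V) (hx : ∀ i, x i ∈ F) :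
    IsBiorthogonal (fun i => (⟨x i, hx i⟩ : F)) (fun i => (μ i).comp F.subtypeL) :=
  ⟨h.apply_self, h.apply_of_ne⟩

theorem quotient (h : IsBiorthogonal x μ) (F : Submodule 𝕜 V) (hF : ∀ i, F ≤ (μ i).ker) :
    IsBiorthogonal (fun i => F.mkQ (x i)) (fun i => F.liftQL (μ i) (hF i)) :=
  ⟨h.apply_self, h.apply_of_ne⟩

theorem one_le_norm_mul_dist (h : IsBiorthogonal x μ) {i j : ι} (hij : i ≠ j) :
    1 ≤ ‖μ j‖ * dist (x i) (x j) := by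
  calc 1 = ‖μ j (x j - x i)‖ := by simp [h.apply_self, h.apply_of_ne i j hij]
    _ ≤ ‖μ j‖ * ‖x j - x i‖ := (μ j).le_opNorm _
    _ = ‖μ j‖ * dist (x i) (x j) := by rw [dist_comm, dist_eq_norm]

theorem not_separableSpace [Uncountable ι] (h : IsBiorthogonal x μ) : ¬ SeparableSpace V := by
  intro hV
  obtain ⟨n, hn⟩ := exists_uncountable_le_natCast fun i => ‖μ i‖
  have hsep : Pairwise fun i j : {i // ‖μ i‖ ≤ n} => 1 / (n + 1 : ℝ) ≤ dist (x i) (x j) := by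
    intro i j hij
    rw [div_le_iff₀' (by positivity)]
    calc 1 ≤ ‖μ j‖ * dist (x i) (x j) := h.one_le_norm_mul_dist (Subtype.coe_injective.ne hij)
      _ ≤ (n + 1) * dist (x i) (x j) := by gcongr; linarith [j.2]
  exact not_countable (Metric.countable_of_pairwise_le_dist (by positivity) hsep)

end IsBiorthogonal

theorem exists_nonseparable_subspace_with_nonseparable_quotient_of_biorthogonal_general
    (E : Type*) [NormedAddCommGroup E] [NormedSpace ℂ E]
    (Γ : Type*) [Uncountable Γ]
    (x : Γ → E) (lam : Γ → (E →L[ℂ] ℂ))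
    (hbi₁ : ∀ α : Γ, lam α (x α) = 1)
    (hbi₂ : ∀ α β : Γ, α ≠ β → lam β (x α) = 0) :
    ∃ F : Submodule ℂ E, IsClosed (F : Set E) ∧
      ¬ TopologicalSpace.IsSeparable (F : Set E) ∧
      ¬ TopologicalSpace.SeparableSpace (E ⧸ F) := by
  have h : IsBiorthogonal x lam := ⟨hbi₁, hbi₂⟩
  obtain ⟨e⟩ := Infinite.nonempty_sum_self_embedding Γ
  let A : Γ → Γ := e ∘ Sum.inl
  let B : Γ → Γ := e ∘ Sum.inr
  let F := (Submodule.span ℂ (Set.range (x ∘ A))).topologicalClosure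
  have hxA (γ : Γ) : x (A γ) ∈ F :=
    Submodule.le_topologicalClosure _ (Submodule.subset_span ⟨γ, rfl⟩)
  have hker (γ : Γ) : F ≤ (lam (B γ)).ker := by
    refine Submodule.topologicalClosure_minimal _ ?_ (lam (B γ)).isClosed_ker
    rw [Submodule.span_le]
    rintro _ ⟨α, rfl⟩
    exact h.apply_of_ne _ _ (e.injective.ne Sum.inl_ne_inr)
  refine ⟨F, Submodule.isClosed_topologicalClosure _, fun hF => ?_, ?_⟩
  · exact ((h.comp (e.injective.comp Sum.inl_injective)).restrict F hxA).not_separableSpace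
      hF.separableSpace
  · exact ((h.comp (e.injective.comp Sum.inr_injective)).quotient F hker).not_separableSpace

/-- **Lemma 2.5.8.** Let `E` be a complex Banach space containing an uncountable biorthogonal
system `{(x_γ, λ_γ) : γ ∈ Γ}`. Then `E` contains a closed linear subspace `F` such that both
`F` and `E/F` are non-separable. -/
theorem exists_nonseparable_subspace_with_nonseparable_quotient_of_biorthogonal
    (E : Type*) [NormedAddCommGroup E] [NormedSpace ℂ E] [CompleteSpace E]
    (Γ : Type*) [Uncountable Γ]
    (x : Γ → E) (lam : Γ → (E →L[ℂ] ℂ))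
    (hbi₁ : ∀ α : Γ, lam α (x α) = 1)
    (hbi₂ : ∀ α β : Γ, α ≠ β → lam β (x α) = 0) :
    ∃ F : Submodule ℂ E, IsClosed (F : Set E) ∧
      ¬ TopologicalSpace.IsSeparable (F : Set E) ∧
      ¬ TopologicalSpace.SeparableSpace (E ⧸ F) :=
  exists_nonseparable_subspace_with_nonseparable_quotient_of_biorthogonal_general E Γ x lam hbi₁
    hbi₂
end

section
/- Let E be a non-separable, reflexive complex Banach space. Then E contains a closed linear subspace F such that both F and the quotient E/F are non-separable. -/
/-!
By Zorn's lemma there is a maximal set of pairs `(xᵢ, fᵢ)` in `E × E'` with `‖fᵢ‖ ≤ 1` and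
`fᵢ xⱼ = δᵢⱼ`. It is uncountable. Otherwise the common kernel `N` of the `fᵢ` lies in the closed
span of the `xᵢ` (a vector of `N` outside it would, by Hahn–Banach, extend the system), so `N` is
separable. By reflexivity the functionals vanishing on `N` form the closed span of the `fᵢ`, a
separable subspace of `E'`, which is therefore separated by countably many vectors `D`; then
`N ∪ D` spans a dense subspace and `E` would be separable.

Split the system into two uncountable halves `A` and `B`. The `xᵢ` are `1`-apart, so the closed span
`F` of the `xᵢ`, `i ∈ A`, is not separable; for `i ∈ B` the functional `fᵢ` vanishes on `F`, so the
classes of these `xᵢ` are still `1`-apart in `E ⧸ F`.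
-/

open TopologicalSpace Set NormedSpace

theorem TopologicalSpace.IsSeparable.countable_of_le_dist {α β : Type*} [PseudoMetricSpace α]
    {s : Set α} (hs : IsSeparable s) {ε : ℝ} (hε : 0 < ε) {u : Set β} {g : β → α}
    (hg : MapsTo g u s) (hu : u.Pairwise fun i j => ε ≤ dist (g i) (g j)) : u.Countable := by
  rcases u.eq_empty_or_nonempty with rfl | ⟨i₀, -⟩
  · exact countable_empty
  have : Nonempty α := ⟨g i₀⟩
  obtain ⟨c, hc, hsc⟩ := hs
  have hnear : ∀ i ∈ u, ∃ y ∈ c, dist (g i) y < ε / 2 := fun i hi =>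
    Metric.mem_closure_iff.1 (hsc (hg hi)) _ (half_pos hε)
  choose! y hyc hy using hnear
  refine countable_of_injective_of_countable_image (f := y) (fun i hi j hj hij => ?_)
    (hc.mono (image_subset_iff.2 hyc))
  by_contra hne
  have hij' := hu hi hj hne
  have htri := dist_triangle_right (g i) (g j) (y i)
  have hyi := hy i hi
  rw [hij] at htri hyi
  linarith [hy j hj]

theorem Set.exists_disjoint_not_countable_subsets {α : Type*} {s : Set α} (hs : ¬ s.Countable) :
    ∃ A ⊆ s, ∃ B ⊆ s, Disjoint A B ∧ ¬ A.Countable ∧ ¬ B.Countable := by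
  rw [← Cardinal.le_aleph0_iff_set_countable] at hs
  obtain ⟨e⟩ : Nonempty (s ⊕ s ≃ s) :=
    Cardinal.eq.1 (by simpa using Cardinal.add_eq_self (le_of_not_ge hs))
  have hinj : ∀ j : s → s ⊕ s, j.Injective → ¬ (range fun i => (e (j i) : α)).Countable := by
    intro j hj
    rwa [← Cardinal.le_aleph0_iff_set_countable, Cardinal.mk_range_eq (fun i => (e (j i) : α))
      fun a b h => hj (e.injective (Subtype.val_injective h))]
  refine ⟨_, range_subset_iff.2 fun i => (e (.inl i)).2, _,
    range_subset_iff.2 fun i => (e (.inr i)).2, ?_, hinj _ Sum.inl_injective,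
    hinj _ Sum.inr_injective⟩
  rw [Set.disjoint_iff]
  rintro _ ⟨⟨i, rfl⟩, j, hji⟩
  exact Sum.inr_ne_inl (e.injective (Subtype.val_injective hji))

section Dual

variable {𝕜 E : Type*} [RCLike 𝕜] [NormedAddCommGroup E] [NormedSpace 𝕜 E]

theorem Submodule.exists_dual_separating_of_notMem (S : Submodule 𝕜 E) (hS : IsClosed (S : Set E))
    {x : E} (hx : x ∉ S) : ∃ f : StrongDual 𝕜 E, ‖f‖ ≤ 1 ∧ (∀ y ∈ S, f y = 0) ∧ f x ≠ 0 := by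
  have : IsClosed (S.toAddSubgroup : Set E) := hS
  obtain ⟨g, hg, hgx⟩ := exists_dual_vector'' 𝕜 (S.mkQ x)
  refine ⟨g ∘L S.mkQL, ?_, fun y hy => ?_, ?_⟩
  · refine ContinuousLinearMap.opNorm_le_bound _ zero_le_one fun y => ?_
    calc ‖g (S.mkQ y)‖ ≤ ‖g‖ * ‖S.mkQ y‖ := g.le_opNorm _
      _ ≤ 1 * ‖y‖ := mul_le_mul hg (Submodule.Quotient.norm_mk_le S y) (norm_nonneg _) zero_le_one
  · simp [(Submodule.Quotient.mk_eq_zero S).2 hy]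
  · have : ‖S.mkQ x‖ ≠ 0 := (QuotientAddGroup.norm_mk_eq_zero (S := S.toAddSubgroup)).not.2 hx
    rw [ContinuousLinearMap.comp_apply, Submodule.mkQL_apply, hgx]
    exact_mod_cast this

theorem norm_apply_le_norm_mkQ {F : Submodule 𝕜 E} {f : StrongDual 𝕜 E} (hf : ‖f‖ ≤ 1)
    (hfF : ∀ y ∈ F, f y = 0) (x : E) : ‖f x‖ ≤ ‖F.mkQ x‖ := by
  refine (QuotientAddGroup.le_norm_iff (S := F.toAddSubgroup)).2 fun m hm => ?_
  have hmx : m - x ∈ F := by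
    rw [← Submodule.Quotient.mk_eq_zero, Submodule.Quotient.mk_sub]
    exact sub_eq_zero.2 hm
  have : f m = f x := sub_eq_zero.1 (by rw [← map_sub]; exact hfF _ hmx)
  rw [← this]
  exact (f.le_opNorm m).trans (mul_le_of_le_one_left (norm_nonneg _) hf)

theorem TopologicalSpace.IsSeparable.exists_countable_separating {G : Set (StrongDual 𝕜 E)}
    (hG : IsSeparable G) :
    ∃ D : Set E, D.Countable ∧ ∀ φ ∈ G, (∀ x ∈ D, φ x = 0) → φ = 0 := by
  have hnorming : ∀ g : StrongDual 𝕜 E, ∃ x : E, ‖x‖ ≤ 1 ∧ ‖g‖ / 2 ≤ ‖g x‖ := by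
    intro g
    rcases eq_or_ne g 0 with rfl | hg
    · exact ⟨0, by simp⟩
    obtain ⟨x, hx, hgx⟩ := g.exists_lt_apply_of_lt_opNorm (half_lt_self (norm_pos_iff.2 hg))
    exact ⟨x, hx.le, hgx.le⟩
  choose x hx hgx using hnorming
  obtain ⟨c, hc, hGc⟩ := hG
  refine ⟨x '' c, hc.image x, fun φ hφ hφD => ?_⟩
  by_contra hφ0
  have hφpos : 0 < ‖φ‖ := norm_pos_iff.2 hφ0
  obtain ⟨g, hg, hφg⟩ := Metric.mem_closure_iff.1 (hGc hφ) (‖φ‖ / 4) (by positivity)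
  rw [dist_eq_norm] at hφg
  have hgxg : ‖g (x g)‖ ≤ ‖φ - g‖ := by
    calc ‖g (x g)‖ = ‖(φ - g) (x g)‖ := by
          rw [sub_apply, hφD _ (mem_image_of_mem x hg), zero_sub, norm_neg]
      _ ≤ ‖φ - g‖ * ‖x g‖ := (φ - g).le_opNorm _
      _ ≤ ‖φ - g‖ := mul_le_of_le_one_right (norm_nonneg _) (hx g)
  linarith [norm_sub_norm_le φ g, hgx g]

variable (𝕜) in
theorem mem_topologicalClosure_span_of_surjective_inclusionInDoubleDual
    (hrefl : Function.Surjective (inclusionInDoubleDual 𝕜 E)) {T : Set (StrongDual 𝕜 E)}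
    {φ : StrongDual 𝕜 E} (hφ : ∀ x : E, (∀ f ∈ T, f x = 0) → φ x = 0) :
    φ ∈ (Submodule.span 𝕜 T).topologicalClosure := by
  by_contra hφT
  obtain ⟨Φ, -, hΦT, hΦφ⟩ := Submodule.exists_dual_separating_of_notMem _
    (Submodule.isClosed_topologicalClosure _) hφT
  obtain ⟨x, rfl⟩ := hrefl Φ
  exact hΦφ (hφ x fun f hf =>
    hΦT f (Submodule.le_topologicalClosure _ (Submodule.subset_span hf)))

theorem not_isSeparable_setOf_forall_apply_eq_zero
    (hrefl : Function.Surjective (inclusionInDoubleDual 𝕜 E)) (hE : ¬ SeparableSpace E)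
    {T : Set (StrongDual 𝕜 E)} (hT : T.Countable) :
    ¬ IsSeparable {x : E | ∀ f ∈ T, f x = 0} := by
  set N := {x : E | ∀ f ∈ T, f x = 0}
  intro hN
  obtain ⟨D, hD, hDsep⟩ := (hT.isSeparable.span (R := 𝕜)).closure.exists_countable_separating
  set X := (Submodule.span 𝕜 (N ∪ D)).topologicalClosure
  have hX : IsSeparable (X : Set E) := by
    rw [Submodule.topologicalClosure_coe]
    exact (hN.union hD.isSeparable).span.closure
  obtain ⟨x, hx⟩ : ∃ x, x ∉ X := by
    by_contra! hall
    exact hE (isSeparable_univ_iff.1 (hX.mono fun x _ => hall x))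
  obtain ⟨φ, -, hφX, hφx⟩ :=
    X.exists_dual_separating_of_notMem (Submodule.isClosed_topologicalClosure _) hx
  have hsub : N ∪ D ⊆ X := Submodule.subset_span.trans (Submodule.le_topologicalClosure _)
  have hφT : φ ∈ (Submodule.span 𝕜 T).topologicalClosure :=
    mem_topologicalClosure_span_of_surjective_inclusionInDoubleDual 𝕜 hrefl
      fun y hy => hφX y (hsub (Or.inl hy))
  rw [← Submodule.topologicalClosure_coe] at hDsep
  exact hφx (by simp [hDsep φ hφT fun y hy => hφX y (hsub (Or.inr hy))])

variable (𝕜 E) in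
def IsBiorthogonalSystem (P : Set (E × StrongDual 𝕜 E)) : Prop :=
  ∀ p ∈ P, ‖p.2‖ ≤ 1 ∧ p.2 p.1 = 1 ∧ ∀ q ∈ P, q ≠ p → p.2 q.1 = 0

namespace IsBiorthogonalSystem

variable {P : Set (E × StrongDual 𝕜 E)}

variable (𝕜 E) in
theorem exists_maximal : ∃ P, Maximal (IsBiorthogonalSystem 𝕜 E) P := by
  refine zorn_subset _ fun c hc hchain => ⟨⋃₀ c, ?_, fun s hs => subset_sUnion_of_mem hs⟩
  rintro p ⟨s, hs, hps⟩
  obtain ⟨hnorm, hone, hzero⟩ := hc hs p hps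
  refine ⟨hnorm, hone, ?_⟩
  rintro q ⟨t, ht, hqt⟩ hqp
  rcases hchain.total hs ht with hst | hts
  · exact (hc ht p (hst hps)).2.2 q hqt hqp
  · exact hzero q (hts hqt) hqp

theorem insert (hP : IsBiorthogonalSystem 𝕜 E P) {x : E} {f : StrongDual 𝕜 E}
    (hxP : ∀ p ∈ P, p.2 x = 0) (hf : ‖f‖ ≤ 1) (hfx : f x = 1) (hfP : ∀ p ∈ P, f p.1 = 0) :
    IsBiorthogonalSystem 𝕜 E (insert (x, f) P) := by
  rintro p (rfl | hp)
  · exact ⟨hf, hfx, by rintro q (rfl | hq) hqp; exacts [absurd rfl hqp, hfP q hq]⟩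
  · obtain ⟨hnorm, hone, hzero⟩ := hP p hp
    exact ⟨hnorm, hone, by rintro q (rfl | hq) hqp; exacts [hxP p hp, hzero q hq hqp]⟩

theorem mem_topologicalClosure_span_of_maximal (hP : Maximal (IsBiorthogonalSystem 𝕜 E) P)
    {x : E} (hxP : ∀ p ∈ P, p.2 x = 0) :
    x ∈ (Submodule.span 𝕜 (Prod.fst '' P)).topologicalClosure := by
  by_contra hx
  obtain ⟨f, hf, hfP, hfx⟩ :=
    Submodule.exists_dual_separating_of_notMem _ (Submodule.isClosed_topologicalClosure _) hx
  have hext := hP.1.insert (x := (f x)⁻¹ • x) (fun p hp => by simp [hxP p hp]) hf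
    (by simp [hfx]) fun p hp =>
      hfP _ (Submodule.le_topologicalClosure _ (Submodule.subset_span (mem_image_of_mem _ hp)))
  have hmem : ((f x)⁻¹ • x, f) ∈ P := hP.2 hext (subset_insert _ _) (mem_insert _ _)
  exact hfx (hxP _ hmem)

theorem not_countable_of_maximal (hrefl : Function.Surjective (inclusionInDoubleDual 𝕜 E))
    (hE : ¬ SeparableSpace E) (hP : Maximal (IsBiorthogonalSystem 𝕜 E) P) : ¬ P.Countable := by
  intro hPc
  apply not_isSeparable_setOf_forall_apply_eq_zero hrefl hE (hPc.image Prod.snd)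
  refine IsSeparable.mono (s := (Submodule.span 𝕜 (Prod.fst '' P)).topologicalClosure) ?_ ?_
  · rw [Submodule.topologicalClosure_coe]
    exact (hPc.image _).isSeparable.span.closure
  · exact fun x hx =>
      mem_topologicalClosure_span_of_maximal hP fun p hp => hx _ (mem_image_of_mem _ hp)

theorem apply_eq_zero_of_mem_topologicalClosure_span (hP : IsBiorthogonalSystem 𝕜 E P)
    {A : Set (E × StrongDual 𝕜 E)} (hAP : A ⊆ P) {p : E × StrongDual 𝕜 E} (hp : p ∈ P)
    (hpA : p ∉ A) {y : E} (hy : y ∈ (Submodule.span 𝕜 (Prod.fst '' A)).topologicalClosure) :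
    p.2 y = 0 := by
  refine Submodule.topologicalClosure_minimal _ ?_ p.2.isClosed_ker hy
  rw [Submodule.span_le]
  rintro _ ⟨q, hq, rfl⟩
  exact (hP p hp).2.2 q (hAP hq) (ne_of_mem_of_not_mem hq hpA)

theorem one_le_dist_fst (hP : IsBiorthogonalSystem 𝕜 E P) {p q : E × StrongDual 𝕜 E}
    (hp : p ∈ P) (hq : q ∈ P) (hpq : p ≠ q) : 1 ≤ dist p.1 q.1 := by
  obtain ⟨hnorm, hone, hzero⟩ := hP p hp
  rw [dist_eq_norm]
  calc (1 : ℝ) = ‖p.2 (p.1 - q.1)‖ := by simp [hone, hzero q hq hpq.symm]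
    _ ≤ ‖p.2‖ * ‖p.1 - q.1‖ := p.2.le_opNorm _
    _ ≤ ‖p.1 - q.1‖ := mul_le_of_le_one_left (norm_nonneg _) hnorm

theorem one_le_dist_mkQ_fst (hP : IsBiorthogonalSystem 𝕜 E P) {F : Submodule 𝕜 E}
    {p q : E × StrongDual 𝕜 E} (hp : p ∈ P) (hq : q ∈ P) (hpq : p ≠ q)
    (hpF : ∀ y ∈ F, p.2 y = 0) : 1 ≤ dist (F.mkQ p.1) (F.mkQ q.1) := by
  obtain ⟨hnorm, hone, hzero⟩ := hP p hp
  rw [dist_eq_norm]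
  calc (1 : ℝ) = ‖p.2 (p.1 - q.1)‖ := by simp [hone, hzero q hq hpq.symm]
    _ ≤ ‖F.mkQ (p.1 - q.1)‖ := norm_apply_le_norm_mkQ hnorm hpF _
    _ = ‖F.mkQ p.1 - F.mkQ q.1‖ := by rw [map_sub]

end IsBiorthogonalSystem

end Dual

theorem exists_nonseparable_subspace_with_nonseparable_quotient_of_reflexive_general
    (E : Type*) [NormedAddCommGroup E] [NormedSpace ℂ E]
    (hnonsep : ¬ TopologicalSpace.SeparableSpace E)
    (hrefl : Function.Surjective (NormedSpace.inclusionInDoubleDual ℂ E)) :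
    ∃ F : Submodule ℂ E, IsClosed (F : Set E) ∧
      ¬ TopologicalSpace.IsSeparable (F : Set E) ∧
      ¬ TopologicalSpace.SeparableSpace (E ⧸ F) := by
  obtain ⟨P, hP⟩ := IsBiorthogonalSystem.exists_maximal ℂ E
  obtain ⟨A, hAP, B, hBP, hAB, hA, hB⟩ := exists_disjoint_not_countable_subsets
    (IsBiorthogonalSystem.not_countable_of_maximal hrefl hnonsep hP)
  set F := (Submodule.span ℂ (Prod.fst '' A)).topologicalClosure
  refine ⟨F, Submodule.isClosed_topologicalClosure _, fun hF => hA ?_, fun hQ => hB ?_⟩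
  · have hAF : MapsTo Prod.fst A F := fun p hp =>
      Submodule.le_topologicalClosure _ (Submodule.subset_span (mem_image_of_mem _ hp))
    exact hF.countable_of_le_dist one_pos hAF fun p hp q hq hpq =>
      hP.1.one_le_dist_fst (hAP hp) (hAP hq) hpq
  · refine (isSeparable_univ_iff.2 hQ).countable_of_le_dist one_pos (g := fun p => F.mkQ p.1)
      (mapsTo_univ _ _) fun p hp q hq hpq =>
    hP.1.one_le_dist_mkQ_fst (hBP hp) (hBP hq) hpq fun y hy =>
      hP.1.apply_eq_zero_of_mem_topologicalClosure_span hAP (hBP hp) (hAB.notMem_of_mem_right hp) hy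

/-- **Corollary 2.5.7.** Let `E` be a non-separable, reflexive complex Banach space. Then `E`
contains a closed linear subspace `F` such that both `F` and `E/F` are non-separable. -/
theorem exists_nonseparable_subspace_with_nonseparable_quotient_of_reflexive
    (E : Type*) [NormedAddCommGroup E] [NormedSpace ℂ E] [CompleteSpace E]
    (hnonsep : ¬ TopologicalSpace.SeparableSpace E)
    (hrefl : Function.Surjective (NormedSpace.inclusionInDoubleDual ℂ E)) :
    ∃ F : Submodule ℂ E, IsClosed (F : Set E) ∧
      ¬ TopologicalSpace.IsSeparable (F : Set E) ∧
      ¬ TopologicalSpace.SeparableSpace (E ⧸ F) :=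
  exists_nonseparable_subspace_with_nonseparable_quotient_of_reflexive_general E hnonsep hrefl
end

section
/- Let E be a complex Banach space with few operators, in the sense that every bounded linear operator T : E → E can be written as T = α·id_E + S for some complex scalar α and some bounded linear operator S : E → E whose range is separable. Let n be a positive natural number, let T_1, …, T_n be bounded linear operators on E, and let F be the closure of the subspace im T_1 + ⋯ + im T_n. Then either F is separable or the quotient E/F is separable. -/
/-!
Write each `T i = α i • id + S i` with `S i` of separable range. If every `α i` vanishes, each
`T i` has separable range, hence so does the closed span `F` of their ranges. Otherwise some
`T i = α • id + S` with `α ≠ 0` has range inside `F`; then `x ≡ -α⁻¹ • S x` modulo `F`, so the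
quotient map restricted to the separable set `range S` is already onto `E ⧸ F`.
-/

open TopologicalSpace

namespace Submodule

section Separable

variable {R M : Type*} [Semiring R] [TopologicalSpace R] [SeparableSpace R]
  [AddCommMonoid M] [Module R M] [TopologicalSpace M] [ContinuousAdd M] [ContinuousSMul R M]

theorem isSeparable_topologicalClosure_iSup {ι : Sort*} [Countable ι] {p : ι → Submodule R M}
    (hp : ∀ i, IsSeparable (p i : Set M)) :
    IsSeparable ((⨆ i, p i).topologicalClosure : Set M) := by
  rw [topologicalClosure_coe, iSup_eq_span]
  exact (IsSeparable.iUnion hp).span.closure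

end Separable

section Quotient

variable {𝕜 E : Type*} [Field 𝕜] [AddCommGroup E] [Module 𝕜 E]

theorem mkQ_comp_surjective_of_range_smul_add_le {F : Submodule 𝕜 E} {a : 𝕜}
    (ha : a ≠ 0) {S : E →ₗ[𝕜] E} (hF : LinearMap.range (a • LinearMap.id + S) ≤ F) :
    Function.Surjective (F.mkQ ∘ S) := by
  intro y
  obtain ⟨x, rfl⟩ := F.mkQ_surjective y
  refine ⟨-a⁻¹ • x, ?_⟩
  have hx : a • (-a⁻¹ • x) + S (-a⁻¹ • x) ∈ F := hF ⟨-a⁻¹ • x, rfl⟩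
  rw [smul_smul, mul_neg, mul_inv_cancel₀ ha, neg_one_smul, neg_add_eq_sub] at hx
  exact (Quotient.eq F).mpr hx

theorem separableSpace_quotient_of_range_smul_add_le [TopologicalSpace E]
    {F : Submodule 𝕜 E} {a : 𝕜} (ha : a ≠ 0) {S : E →ₗ[𝕜] E} (hS : IsSeparable (Set.range S))
    (hF : LinearMap.range (a • LinearMap.id + S) ≤ F) : SeparableSpace (E ⧸ F) := by
  rw [← isSeparable_univ_iff, ← (F.mkQ_comp_surjective_of_range_smul_add_le ha hF).range_eq,
    Set.range_comp]
  exact hS.image F.continuous_mkQ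

end Quotient

end Submodule

theorem separable_or_separable_quotient_of_fewOperators_general
    (E : Type*) [NormedAddCommGroup E] [NormedSpace ℂ E]
    (hfew : ∀ T : E →L[ℂ] E, ∃ (α : ℂ) (S : E →L[ℂ] E),
      T = α • ContinuousLinearMap.id ℂ E + S ∧ TopologicalSpace.IsSeparable (Set.range S))
    (n : ℕ) (T : Fin n → (E →L[ℂ] E))
    (F : Submodule ℂ E) (hF : F = (⨆ i, LinearMap.range (T i : E →ₗ[ℂ] E)).topologicalClosure) :
    TopologicalSpace.IsSeparable (F : Set E) ∨
      TopologicalSpace.SeparableSpace (E ⧸ F) := by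
  choose α S hTS hS using hfew
  by_cases hα : ∀ i, α (T i) = 0
  · left
    rw [hF]
    refine Submodule.isSeparable_topologicalClosure_iSup fun i ↦ ?_
    have hTi : T i = S (T i) := by simpa [hα i] using hTS (T i)
    rw [LinearMap.coe_range, ContinuousLinearMap.coe_coe, hTi]
    exact hS (T i)
  · obtain ⟨i, hi⟩ := not_forall.mp hα
    right
    refine Submodule.separableSpace_quotient_of_range_smul_add_le hi (S := S (T i)) (hS _) ?_
    have hTi : LinearMap.range (T i : E →ₗ[ℂ] E) ≤ F :=
      hF ▸ (le_iSup (fun j ↦ LinearMap.range (T j : E →ₗ[ℂ] E)) i).trans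
        (Submodule.le_topologicalClosure _)
    rwa [hTS (T i)] at hTi

/-- **Proposition 2.5.6.** Let `E` be a complex Banach space with few operators, i.e. every
bounded operator on `E` is the sum of a scalar multiple of the identity and an operator with
separable range. If `F` is the closure of `im T_1 + ⋯ + im T_n` for bounded operators
`T_1, …, T_n` on `E`, then either `F` or `E/F` is separable. -/
theorem separable_or_separable_quotient_of_fewOperators
    (E : Type*) [NormedAddCommGroup E] [NormedSpace ℂ E] [CompleteSpace E]
    (hfew : ∀ T : E →L[ℂ] E, ∃ (α : ℂ) (S : E →L[ℂ] E),
      T = α • ContinuousLinearMap.id ℂ E + S ∧ TopologicalSpace.IsSeparable (Set.range S))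
    (n : ℕ) (hn : 0 < n) (T : Fin n → (E →L[ℂ] E))
    (F : Submodule ℂ E) (hF : F = (⨆ i, LinearMap.range (T i : E →ₗ[ℂ] E)).topologicalClosure) :
    TopologicalSpace.IsSeparable (F : Set E) ∨
      TopologicalSpace.SeparableSpace (E ⧸ F) :=
  separable_or_separable_quotient_of_fewOperators_general E hfew n T F hF
end

section
/- Let X be a non-separable, reflexive complex Banach space with few operators, i.e. every bounded linear operator T : X → X can be written as T = α·id_X + S with α ∈ ℂ and S a bounded operator with separable range. Let E = X' be the continuous dual space of X, and let D be a closed linear subspace of E. Then the following are equivalent: (a) either D is separable or E/D is separable; (b) D = ker T for some bounded linear operator T : E → E; (c) there exist n ∈ ℕ and bounded linear operators T_1, …, T_n : E → E such that D = ⋂_{i=1}^n ker T_i. -/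
/-!
Since `X` is reflexive, every operator on `E = X'` is an adjoint `u'`, so by the few-operators
hypothesis it is `α • 1 + S'` with `S` of separable range. If `α ≠ 0` its kernel lies in
`range S'`, which is separable because `S'` factors through the dual of the separable reflexive
space `closure (range S)`. If `α = 0` its kernel is the annihilator of `closure (range S)`, and the
quotient of `E` by it is dominated by that same separable dual. Hence (c) implies (a).

Conversely, if `E / D` is separable then `D = ker (J ∘ q)`, where `q` is the quotient map and
`J : E / D → E` is the injective operator `w ↦ ∑ 2⁻ⁿ hₙ(w) eₙ`, built from a separating sequence
`hₙ` of functionals on `E / D` and a biorthogonal sequence `(eₙ, ψₙ)` in the infinite-dimensional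
space `E`. If `D` is separable, it lies in a separable complemented subspace `Z` of the reflexive
space `E` (a countable back-and-forth construction yields `Z ⊆ E` and `W ⊆ E'` norming each other,
and then the pre-annihilator of `W` is a closed complement of `Z`); applying the previous case
inside `Z` and composing with the projection onto `Z` gives (b).
-/

open NormedSpace TopologicalSpace Function

open scoped NNReal

section

variable {𝕜 : Type*} [RCLike 𝕜]

section Normed

variable {F : Type*} [NormedAddCommGroup F] [NormedSpace 𝕜 F]

theorem Submodule.exists_dual_forall_eq_zero_ne_zero {V : Submodule 𝕜 F}
    (hV : IsClosed (V : Set F)) {x : F} (hx : x ∉ V) :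
    ∃ f : StrongDual 𝕜 F, (∀ v ∈ V, f v = 0) ∧ f x ≠ 0 := by
  have : IsClosed (V : Set F) := hV
  obtain ⟨g, hg⟩ := SeparatingDual.exists_ne_zero (R := 𝕜)
    (mt (Submodule.Quotient.mk_eq_zero V).1 hx)
  exact ⟨g.comp V.mkQL, fun v hv => by simp [(Submodule.Quotient.mk_eq_zero V).2 hv], hg⟩

theorem Submodule.eq_top_of_forall_dual_eq_zero {V : Submodule 𝕜 F} (hV : IsClosed (V : Set F))
    (h : ∀ f : StrongDual 𝕜 F, (∀ v ∈ V, f v = 0) → f = 0) : V = ⊤ := by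
  refine Submodule.eq_top_iff'.2 fun x => by_contra fun hx => ?_
  obtain ⟨f, hfV, hfx⟩ := V.exists_dual_forall_eq_zero_ne_zero hV hx
  simp [h f hfV] at hfx

theorem Submodule.isSeparable_topologicalClosure {M : Submodule 𝕜 F}
    (hM : IsSeparable (M : Set F)) : IsSeparable (M.topologicalClosure : Set F) := by
  rw [Submodule.topologicalClosure_coe]
  exact hM.closure

theorem StrongDual.exists_norm_le_two_mul_norm_apply (f : StrongDual 𝕜 F) :
    ∃ x : F, ‖x‖ ≤ 1 ∧ ‖f‖ ≤ 2 * ‖f x‖ := by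
  rcases eq_or_ne f 0 with rfl | hf
  · exact ⟨0, by simp⟩
  obtain ⟨x, hx, hfx⟩ := f.exists_lt_apply_of_lt_opNorm (half_lt_self (norm_pos_iff.2 hf))
  exact ⟨x, hx.le, by linarith⟩

def IsNorming (c : ℝ≥0) (T : Set (StrongDual 𝕜 F)) (S : Set F) : Prop :=
  ∀ s ∈ S, ∀ ε > 0, ∃ t ∈ T, ‖t‖ ≤ 1 ∧ ‖s‖ ≤ c * ‖t s‖ + ε

namespace IsNorming

variable {c : ℝ≥0} {T : Set (StrongDual 𝕜 F)} {S : Set F}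

theorem of_forall (h : ∀ s ∈ S, ∃ t ∈ T, ‖t‖ ≤ 1 ∧ ‖s‖ ≤ c * ‖t s‖) : IsNorming c T S :=
  fun s hs ε hε => (h s hs).imp fun _ ⟨ht, ht1, hts⟩ => ⟨ht, ht1, by linarith⟩

theorem closure (h : IsNorming c T S) : IsNorming c T (closure S) := by
  intro s hs ε hε
  obtain ⟨s', hs'S, hss'⟩ := Metric.mem_closure_iff.1 hs (ε / (2 * (c + 1))) (by positivity)
  obtain ⟨t, ht, ht1, hts'⟩ := h s' hs'S (ε / 2) (half_pos hε)
  refine ⟨t, ht, ht1, ?_⟩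
  have hδ : (c + 1) * ‖s - s'‖ ≤ ε / 2 := by
    rw [← dist_eq_norm, ← le_div_iff₀' (by linarith), div_div]
    exact hss'.le
  have hs : ‖s‖ - ‖s'‖ ≤ ‖s - s'‖ := norm_sub_norm_le s s'
  have ht : ‖t s'‖ - ‖t s‖ ≤ ‖s - s'‖ := by
    calc ‖t s'‖ - ‖t s‖ ≤ ‖t s' - t s‖ := norm_sub_norm_le _ _
    _ = ‖t (s' - s)‖ := by rw [map_sub]
    _ ≤ ‖s' - s‖ := (t.le_opNorm _).trans (mul_le_of_le_one_left (norm_nonneg _) ht1)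
    _ = ‖s - s'‖ := norm_sub_rev _ _
  nlinarith

theorem norm_le_mul_norm_add (h : IsNorming c T S) {s y : F} (hs : s ∈ S)
    (hy : ∀ t ∈ T, t y = 0) : ‖s‖ ≤ c * ‖s + y‖ := by
  refine le_of_forall_pos_le_add fun ε hε => ?_
  obtain ⟨t, ht, ht1, hts⟩ := h s hs ε hε
  have : ‖t s‖ ≤ ‖s + y‖ := by
    calc ‖t s‖ = ‖t (s + y)‖ := by rw [map_add, hy t ht, add_zero]
    _ ≤ ‖s + y‖ := (t.le_opNorm _).trans (mul_le_of_le_one_left (norm_nonneg _) ht1)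
  nlinarith

theorem eq_zero (h : IsNorming c T S) {s : F} (hs : s ∈ S) (h0 : ∀ t ∈ T, t s = 0) : s = 0 := by
  simpa using h.norm_le_mul_norm_add hs (y := -s) fun t ht => by rw [map_neg, h0 t ht, neg_zero]

end IsNorming

theorem separableSpace_of_separableSpace_strongDual [SeparableSpace (StrongDual 𝕜 F)] :
    SeparableSpace F := by
  obtain ⟨G, hGc, hGd⟩ := exists_countable_dense (StrongDual 𝕜 F)
  choose μ hμ1 hμ2 using StrongDual.exists_norm_le_two_mul_norm_apply (𝕜 := 𝕜) (F := F)
  set V := (Submodule.span 𝕜 (μ '' G)).topologicalClosure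
  have hG : IsNorming 2 (inclusionInDoubleDual 𝕜 F '' V) G := by
    refine IsNorming.of_forall fun f hf =>
      ⟨inclusionInDoubleDual 𝕜 F (μ f), ⟨μ f, ?_, rfl⟩, ?_, by simpa using hμ2 f⟩
    · exact Submodule.le_topologicalClosure _ (Submodule.subset_span ⟨f, hf, rfl⟩)
    · exact (double_dual_bound 𝕜 F _).trans (hμ1 f)
  have hV := hG.closure
  rw [hGd.closure_eq] at hV
  have hVtop : V = ⊤ :=
    Submodule.eq_top_of_forall_dual_eq_zero (Submodule.isClosed_topologicalClosure _)
      fun f hf => hV.eq_zero (Set.mem_univ f) fun _ ⟨v, hv, hvt⟩ => hvt ▸ hf v hv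
  rw [← isSeparable_univ_iff, ← Submodule.top_coe (R := 𝕜), ← hVtop]
  exact Submodule.isSeparable_topologicalClosure (hGc.image μ).isSeparable.span

end Normed

section Biorthogonal

variable {F : Type*} [NormedAddCommGroup F] [NormedSpace 𝕜 F]

theorem exists_forall_dual_eq_zero_notMem (hF : ¬FiniteDimensional 𝕜 F)
    (s : Finset (StrongDual 𝕜 F)) (G : Submodule 𝕜 F) [FiniteDimensional 𝕜 G] :
    ∃ x : F, (∀ f ∈ s, f x = 0) ∧ x ∉ G := by
  set Φ : F →ₗ[𝕜] (s → 𝕜) := LinearMap.pi fun f => (f : StrongDual 𝕜 F)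
  have hΦ : ∀ x, x ∈ LinearMap.ker Φ ↔ ∀ f ∈ s, f x = 0 := fun x => by
    simp [Φ, funext_iff]
  by_contra! h
  have : FiniteDimensional 𝕜 (LinearMap.ker Φ) :=
    Submodule.finiteDimensional_of_le fun x hx => h x ((hΦ x).1 hx)
  have : FiniteDimensional 𝕜 (F ⧸ LinearMap.ker Φ) :=
    LinearEquiv.finiteDimensional (Φ.quotKerEquivRange).symm
  exact hF (Module.Finite.of_submodule_quotient (LinearMap.ker Φ))

theorem exists_biorthogonal (hF : ¬FiniteDimensional 𝕜 F) :
    ∃ (e : ℕ → F) (ψ : ℕ → StrongDual 𝕜 F), (∀ n, ‖e n‖ ≤ 1) ∧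
      ∀ n m, ψ n (e m) = if n = m then 1 else 0 := by
  classical
  let r : F × StrongDual 𝕜 F → F × StrongDual 𝕜 F → Prop := fun p q => p.2 q.1 = 0 ∧ q.2 p.1 = 0
  have : Std.Symm r := ⟨fun _ _ h => h.symm⟩
  obtain ⟨p, hp, hpr⟩ := exists_seq_of_forall_finset_exists' (fun p => ‖p.1‖ ≤ 1 ∧ p.2 p.1 = 1) r
    fun s _ => by
      set G := Submodule.span 𝕜 (Prod.fst '' (s : Set (F × StrongDual 𝕜 F)))
      have : FiniteDimensional 𝕜 G := FiniteDimensional.span_of_finite 𝕜 (s.finite_toSet.image _)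
      obtain ⟨x, hxs, hxG⟩ := exists_forall_dual_eq_zero_notMem hF (s.image Prod.snd) G
      have hx0 : x ≠ 0 := fun h => hxG (h ▸ G.zero_mem)
      set x' := (‖x‖⁻¹ : 𝕜) • x
      have hx'G : x' ∉ G := by rwa [G.smul_mem_iff (by simpa using hx0)]
      obtain ⟨f, hfG, hfx⟩ :=
        G.exists_dual_forall_eq_zero_ne_zero (Submodule.closed_of_finiteDimensional G) hx'G
      refine ⟨(x', (f x')⁻¹ • f), ⟨?_, by simp [hfx]⟩, fun q hq => ⟨?_, ?_⟩⟩
      · simp [x', norm_smul, hx0]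
      · simp [x', hxs q.2 (Finset.mem_image_of_mem _ hq)]
      · simp [hfG q.1 (Submodule.subset_span ⟨q, hq, rfl⟩)]
  refine ⟨fun n => (p n).1, fun n => (p n).2, fun n => (hp n).1, fun n m => ?_⟩
  split_ifs with h
  · exact h ▸ (hp n).2
  · exact (hpr h).1

theorem not_finiteDimensional_of_biorthogonal (e : ℕ → F) (ψ : ℕ → StrongDual 𝕜 F)
    (h : ∀ n m, ψ n (e m) = if n = m then 1 else 0) : ¬FiniteDimensional 𝕜 F := by
  classical
  intro hF
  have he : LinearIndependent 𝕜 e := by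
    refine LinearIndependent.of_comp (LinearMap.pi fun n => (ψ n : F →ₗ[𝕜] 𝕜)) ?_
    have hΦe : (LinearMap.pi fun n => (ψ n : F →ₗ[𝕜] 𝕜)) ∘ e = fun m => Pi.single m 1 := by
      ext m n
      simp [h, Pi.single_apply]
    rw [hΦe]
    exact Pi.linearIndependent_single_one ℕ 𝕜
  have := he.finite
  exact not_finite ℕ

theorem exists_seq_dual_separating [SeparableSpace F] :
    ∃ h : ℕ → StrongDual 𝕜 F, (∀ n, ‖h n‖ ≤ 1) ∧ ∀ x, (∀ n, h n x = 0) → x = 0 := by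
  choose h hh1 hh2 using fun n => exists_dual_vector'' 𝕜 (denseSeq F n)
  have hnorming : IsNorming 1 (Set.range h) Set.univ := by
    rw [← (denseRange_denseSeq F).closure_range]
    refine (IsNorming.of_forall ?_).closure
    rintro - ⟨n, rfl⟩
    exact ⟨h n, ⟨n, rfl⟩, hh1 n, by simp [hh2]⟩
  exact ⟨h, hh1, fun x hx => hnorming.eq_zero (Set.mem_univ x) (by grind)⟩

theorem exists_injective_of_separableSpace_s8 [CompleteSpace F] (hF : ¬FiniteDimensional 𝕜 F)
    (Z : Type*) [NormedAddCommGroup Z] [NormedSpace 𝕜 Z] [SeparableSpace Z] :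
    ∃ J : Z →L[𝕜] F, Injective J := by
  obtain ⟨e, ψ, he, hψ⟩ := exists_biorthogonal hF
  obtain ⟨h, hh, hsep⟩ := exists_seq_dual_separating (𝕜 := 𝕜) (F := Z)
  set u : ℕ → Z →L[𝕜] F := fun n => ((1 / 2 : 𝕜) ^ n) • (h n).smulRight (e n)
  have hu : Summable u := by
    refine Summable.of_norm_bounded summable_geometric_two fun n => ?_
    simp only [u, norm_smul, ContinuousLinearMap.norm_smulRight_apply, norm_pow, norm_div,
      norm_one, RCLike.norm_ofNat]
    exact mul_le_of_le_one_right (by positivity) (mul_le_one₀ (hh n) (norm_nonneg _) (he n))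
  refine ⟨∑' n, u n, (injective_iff_map_eq_zero _).2 fun x hx => hsep x fun m => ?_⟩
  -- `ψ m` reads off the `m`-th coefficient `2⁻ᵐ hₘ x` of `(∑' n, u n) x`.
  have hψx : ψ m ((∑' n, u n) x) = ∑' n, ψ m (u n x) :=
    ((ψ m).comp (ContinuousLinearMap.apply 𝕜 F x)).map_tsum hu
  rw [hx, map_zero, tsum_eq_single m fun n hn => by simp [u, hψ, Ne.symm hn]] at hψx
  simpa [u, hψ] using hψx.symm

end Biorthogonal

namespace ContinuousLinearMap

variable {A B : Type*} [NormedAddCommGroup A] [NormedSpace 𝕜 A] [NormedAddCommGroup B]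
  [NormedSpace 𝕜 B]

noncomputable def dualMap (u : A →L[𝕜] B) : StrongDual 𝕜 B →L[𝕜] StrongDual 𝕜 A :=
  (ContinuousLinearMap.compL 𝕜 A B 𝕜).flip u

@[simp]
theorem dualMap_apply (u : A →L[𝕜] B) (f : StrongDual 𝕜 B) (x : A) : u.dualMap f x = f (u x) :=
  rfl

@[simp]
theorem dualMap_id : (ContinuousLinearMap.id 𝕜 A).dualMap = ContinuousLinearMap.id 𝕜 _ := rfl

theorem dualMap_smul_add (α : 𝕜) (u v : A →L[𝕜] B) :
    (α • u + v).dualMap = α • u.dualMap + v.dualMap := by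
  simp only [dualMap, map_add, map_smul]

end ContinuousLinearMap

def IsReflexive (𝕜 Y : Type*) [RCLike 𝕜] [NormedAddCommGroup Y] [NormedSpace 𝕜 Y] : Prop :=
  Surjective (inclusionInDoubleDual 𝕜 Y)

namespace IsReflexive

variable {Y : Type*} [NormedAddCommGroup Y] [NormedSpace 𝕜 Y]

theorem strongDual (hY : IsReflexive 𝕜 Y) : IsReflexive 𝕜 (StrongDual 𝕜 Y) := by
  intro Φ
  refine ⟨Φ.comp (inclusionInDoubleDual 𝕜 Y), ContinuousLinearMap.ext fun ψ => ?_⟩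
  obtain ⟨x, rfl⟩ := hY ψ
  rfl

theorem submodule (hY : IsReflexive 𝕜 Y) {M : Submodule 𝕜 Y} (hM : IsClosed (M : Set Y)) :
    IsReflexive 𝕜 M := by
  intro Φ
  obtain ⟨x, hx⟩ := hY (Φ.comp M.subtypeL.dualMap)
  have hxΦ : ∀ f : StrongDual 𝕜 Y, f x = Φ (M.subtypeL.dualMap f) := fun f => congrArg (· f) hx
  have hxM : x ∈ M := by
    by_contra hxM
    obtain ⟨f, hfM, hfx⟩ := M.exists_dual_forall_eq_zero_ne_zero hM hxM
    refine hfx ((hxΦ f).trans ?_)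
    rw [show M.subtypeL.dualMap f = 0 from ContinuousLinearMap.ext fun m => hfM m m.2, map_zero]
  refine ⟨⟨x, hxM⟩, ContinuousLinearMap.ext fun g => ?_⟩
  obtain ⟨G, hG, -⟩ := exists_extension_norm_eq M g
  have hGg : M.subtypeL.dualMap G = g := ContinuousLinearMap.ext hG
  rw [dual_def, ← hG, ← hGg]
  exact hxΦ G

theorem separableSpace_strongDual (hY : IsReflexive 𝕜 Y) [SeparableSpace Y] :
    SeparableSpace (StrongDual 𝕜 Y) :=
  have := hY.denseRange.separableSpace (inclusionInDoubleDual 𝕜 Y).continuous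
  separableSpace_of_separableSpace_strongDual (𝕜 := 𝕜)

theorem separableSpace_strongDual_topologicalClosure (hY : IsReflexive 𝕜 Y) {M : Submodule 𝕜 Y}
    (hM : IsSeparable (M : Set Y)) : SeparableSpace (StrongDual 𝕜 M.topologicalClosure) :=
  have := (Submodule.isSeparable_topologicalClosure hM).separableSpace
  (hY.submodule M.isClosed_topologicalClosure).separableSpace_strongDual

theorem exists_dualMap_eq (hY : IsReflexive 𝕜 Y) (T : StrongDual 𝕜 Y →L[𝕜] StrongDual 𝕜 Y) :
    ∃ u : Y →L[𝕜] Y, u.dualMap = T := by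
  let ι := LinearIsometryEquiv.ofSurjective (inclusionInDoubleDualLi 𝕜 (E := Y)) hY
  refine ⟨(ι.symm : _ →L[𝕜] Y).comp (T.dualMap.comp (inclusionInDoubleDual 𝕜 Y)), ?_⟩
  ext f x
  change (ι (ι.symm _)) f = _
  rw [ι.apply_symm_apply]
  rfl

theorem isSeparable_range_dualMap (hY : IsReflexive 𝕜 Y) {S : Y →L[𝕜] Y}
    (hS : IsSeparable (Set.range S)) : IsSeparable (Set.range S.dualMap) := by
  set M := (Submodule.span 𝕜 (Set.range S)).topologicalClosure
  have hMS : ∀ x, S x ∈ M := fun x =>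
    Submodule.le_topologicalClosure _ (Submodule.subset_span ⟨x, rfl⟩)
  have := hY.separableSpace_strongDual_topologicalClosure (M := Submodule.span 𝕜 (Set.range S))
    hS.span
  refine (isSeparable_range (S.codRestrict M hMS).dualMap.continuous).mono ?_
  rintro - ⟨f, rfl⟩
  exact ⟨M.subtypeL.dualMap f, rfl⟩

end IsReflexive

theorem separableSpace_of_surjective_of_norm_le {A B C Fq Fr : Type*} [AddCommGroup A]
    [NormedAddCommGroup B] [SeminormedAddCommGroup C] [SeparableSpace C] [FunLike Fq A B]
    [AddMonoidHomClass Fq A B] [FunLike Fr A C] [AddMonoidHomClass Fr A C] (q : Fq) (r : Fr)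
    (hq : Surjective q) (hr : Surjective r) (h : ∀ a, ‖q a‖ ≤ ‖r a‖) : SeparableSpace B := by
  set g : C → B := q ∘ surjInv hr
  have hg : LipschitzWith 1 g := LipschitzWith.of_dist_le_mul fun c c' => by
    have := h (surjInv hr c - surjInv hr c')
    rwa [map_sub, map_sub, surjInv_eq hr, surjInv_eq hr, ← dist_eq_norm, ← dist_eq_norm,
      ← one_mul (dist c c')] at this
  have hgq : ∀ a, g (r a) = q a := fun a => by
    have := h (surjInv hr (r a) - a)
    rwa [map_sub, map_sub, surjInv_eq hr, sub_self, norm_zero, norm_le_zero_iff, sub_eq_zero]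
      at this
  refine (Surjective.denseRange fun b => ?_).separableSpace hg.continuous
  obtain ⟨a, rfl⟩ := hq b
  exact ⟨r a, hgq a⟩

theorem IsReflexive.separableSpace_quotient_polarSubmodule {Y : Type*} [NormedAddCommGroup Y]
    [NormedSpace 𝕜 Y] (hY : IsReflexive 𝕜 Y) {M : Submodule 𝕜 Y} (hM : IsSeparable (M : Set Y)) :
    SeparableSpace (StrongDual 𝕜 Y ⧸ StrongDual.polarSubmodule 𝕜 M) := by
  have : IsClosed (StrongDual.polarSubmodule 𝕜 M : Set (StrongDual 𝕜 Y)) :=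
    isClosed_polar 𝕜 (M : Set Y)
  have := hY.separableSpace_strongDual_topologicalClosure hM
  set N := M.topologicalClosure
  set r := N.subtypeL.dualMap
  have hr : Surjective r := fun g =>
    (exists_extension_norm_eq N g).imp fun G hG => ContinuousLinearMap.ext hG.1
  refine separableSpace_of_surjective_of_norm_le (A := StrongDual 𝕜 Y)
    (StrongDual.polarSubmodule 𝕜 M).mkQ r (Submodule.mkQ_surjective _) hr fun f => ?_
  -- `f` and a norm-preserving extension `G` of `f|N` agree on `M`, so have the same class.
  obtain ⟨G, hG, hGn⟩ := exists_extension_norm_eq N (r f)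
  have hfG : f - G ∈ StrongDual.polarSubmodule 𝕜 M := by
    rw [StrongDual.mem_polarSubmodule]
    intro x hx
    simp [hG ⟨x, M.le_topologicalClosure hx⟩, r]
  change ‖Submodule.Quotient.mk f‖ ≤ ‖r f‖
  rw [← hGn, (Submodule.Quotient.eq _).2 hfG]
  exact Submodule.Quotient.norm_mk_le _ _

theorem Submodule.isClosed_sup_of_norm_le_mul_norm_add {F : Type*} [NormedAddCommGroup F]
    [NormedSpace 𝕜 F] [CompleteSpace F] {Z V : Submodule 𝕜 F} (hZ : IsClosed (Z : Set F))
    (hV : IsClosed (V : Set F)) {c : ℝ≥0} (h : ∀ z ∈ Z, ∀ v ∈ V, ‖z‖ ≤ c * ‖z + v‖) :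
    IsClosed ((Z ⊔ V : Submodule 𝕜 F) : Set F) := by
  have : IsClosed (V : Set F) := hV
  have : CompleteSpace Z := hZ.completeSpace_coe
  set q := V.mkQL.comp Z.subtypeL
  have hq : AntilipschitzWith c q := q.antilipschitz_of_bound fun z => by
    refine le_of_forall_pos_le_add fun ε hε => ?_
    obtain ⟨m, hm, hmz⟩ := Submodule.Quotient.norm_mk_lt (q z) (ε := ε / (c + 1)) (by positivity)
    have hzm : ‖(z : F)‖ ≤ c * ‖m‖ := by
      simpa using h z z.2 (m - z) ((Submodule.Quotient.eq V).1 hm)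
    have : (c : ℝ) * (ε / (c + 1)) ≤ ε := by
      rw [mul_div_assoc', div_le_iff₀ (by positivity)]
      nlinarith
    calc ‖z‖ ≤ c * ‖m‖ := hzm
    _ ≤ c * (‖q z‖ + ε / (c + 1)) := by gcongr
    _ ≤ c * ‖q z‖ + ε := by rw [mul_add]; linarith
  have hsup : ((Z ⊔ V : Submodule 𝕜 F) : Set F) = V.mkQL ⁻¹' Set.range q := by
    ext x
    simp only [SetLike.mem_coe, Submodule.mem_sup, Set.mem_preimage, Set.mem_range]
    constructor
    · rintro ⟨z, hz, v, hv, rfl⟩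
      exact ⟨⟨z, hz⟩, (Submodule.Quotient.eq V).2 (by simpa using V.neg_mem hv)⟩
    · rintro ⟨z, hz⟩
      exact ⟨z, z.2, x - z, (Submodule.Quotient.eq V).1 hz.symm, add_sub_cancel _ _⟩
  rw [hsup]
  exact (hq.isClosed_range q.uniformContinuous).preimage V.mkQL.continuous

section Preannihilator

variable {Y : Type*} [NormedAddCommGroup Y] [NormedSpace 𝕜 Y]

theorem LinearMap.mem_polarSubmodule_topDualPairing {W : Submodule 𝕜 (StrongDual 𝕜 Y)} {y : Y} :
    y ∈ (topDualPairing 𝕜 Y).polarSubmodule W ↔ ∀ φ ∈ W, φ y = 0 := by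
  change y ∈ (topDualPairing 𝕜 Y).polar W ↔ _
  rw [LinearMap.polar_subMulAction]
  rfl

theorem LinearMap.isClosed_polarSubmodule_topDualPairing (W : Submodule 𝕜 (StrongDual 𝕜 Y)) :
    IsClosed (((topDualPairing 𝕜 Y).polarSubmodule W : Submodule 𝕜 Y) : Set Y) := by
  change IsClosed ((topDualPairing 𝕜 Y).polar W)
  rw [LinearMap.polar_eq_iInter]
  exact isClosed_biInter fun φ _ => isClosed_le (continuous_norm.comp φ.continuous)
    continuous_const

theorem IsReflexive.mem_of_forall_polarSubmodule_topDualPairing (hY : IsReflexive 𝕜 Y)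
    {W : Submodule 𝕜 (StrongDual 𝕜 Y)} (hW : IsClosed (W : Set (StrongDual 𝕜 Y)))
    {f : StrongDual 𝕜 Y} (hf : ∀ y ∈ (topDualPairing 𝕜 Y).polarSubmodule W, f y = 0) : f ∈ W := by
  by_contra hfW
  obtain ⟨Ψ, hΨW, hΨf⟩ := W.exists_dual_forall_eq_zero_ne_zero hW hfW
  obtain ⟨y, rfl⟩ := hY Ψ
  exact hΨf (hf y (LinearMap.mem_polarSubmodule_topDualPairing.2 hΨW))

theorem IsReflexive.closedComplemented_of_isNorming [CompleteSpace Y] (hY : IsReflexive 𝕜 Y)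
    {Z : Submodule 𝕜 Y} {W : Submodule 𝕜 (StrongDual 𝕜 Y)} (hZ : IsClosed (Z : Set Y))
    (hW : IsClosed (W : Set (StrongDual 𝕜 Y))) {c₁ c₂ : ℝ≥0}
    (hWZ : IsNorming c₁ (W : Set (StrongDual 𝕜 Y)) Z)
    (hZW : IsNorming c₂ (inclusionInDoubleDual 𝕜 Y '' Z) (W : Set (StrongDual 𝕜 Y))) :
    Z.ClosedComplemented := by
  set V := (topDualPairing 𝕜 Y).polarSubmodule W
  have hV : IsClosed (V : Set Y) := LinearMap.isClosed_polarSubmodule_topDualPairing W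
  have hnorm : ∀ z ∈ Z, ∀ v ∈ V, ‖z‖ ≤ c₁ * ‖z + v‖ := fun z hz v hv =>
    hWZ.norm_le_mul_norm_add hz (LinearMap.mem_polarSubmodule_topDualPairing.1 hv)
  have hdisj : Disjoint Z V := Submodule.disjoint_def.2 fun x hxZ hxV => by
    simpa using hnorm x hxZ (-x) (V.neg_mem hxV)
  have htop : Z ⊔ V = ⊤ := by
    refine Submodule.eq_top_of_forall_dual_eq_zero
      (Submodule.isClosed_sup_of_norm_le_mul_norm_add hZ hV hnorm) fun f hf => ?_
    have hfW : f ∈ W := hY.mem_of_forall_polarSubmodule_topDualPairing hW fun y hy =>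
      hf y (Submodule.mem_sup_right hy)
    exact hZW.eq_zero hfW fun _ ⟨z, hz, hzt⟩ => hzt ▸ hf z (Submodule.mem_sup_left hz)
  exact Submodule.ClosedComplemented.of_isCompl_isClosed ⟨hdisj, codisjoint_iff.2 htop⟩ hZ hV

end Preannihilator

section CountableClosure

theorem span_iUnion_subset_closure {G : Type*} [NormedAddCommGroup G] [NormedSpace 𝕜 G]
    {C : ℕ → Set G} (hC : Monotone C)
    (h : ∀ n, (Submodule.span 𝕜 (C n) : Set G) ⊆ closure (C (n + 1))) :
    (Submodule.span 𝕜 (⋃ n, C n) : Set G) ⊆ closure (⋃ n, C n) := by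
  intro x hx
  rw [SetLike.mem_coe, Submodule.span_iUnion, Submodule.mem_iSup_of_directed _
    (Monotone.directed_le fun _ _ hmn => Submodule.span_mono (hC hmn))] at hx
  obtain ⟨n, hn⟩ := hx
  exact closure_mono (Set.subset_iUnion _ (n + 1)) (h n hn)

theorem exists_countable_mapsTo_span_subset_closure {G₁ G₂ : Type*} [NormedAddCommGroup G₁]
    [NormedSpace 𝕜 G₁] [NormedAddCommGroup G₂] [NormedSpace 𝕜 G₂] (a : G₁ → G₂) (b : G₂ → G₁)
    {A : Set G₁} (hA : A.Countable) :
    ∃ (C₁ : Set G₁) (C₂ : Set G₂), C₁.Countable ∧ C₂.Countable ∧ A ⊆ C₁ ∧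
      Set.MapsTo a C₁ C₂ ∧ Set.MapsTo b C₂ C₁ ∧
      (Submodule.span 𝕜 C₁ : Set G₁) ⊆ closure C₁ ∧
      (Submodule.span 𝕜 C₂ : Set G₂) ⊆ closure C₂ := by
  choose! σ₁ hσ₁ using fun (C : Set G₁) (hC : C.Countable) => hC.isSeparable.span (R := 𝕜)
  choose! σ₂ hσ₂ using fun (C : Set G₂) (hC : C.Countable) => hC.isSeparable.span (R := 𝕜)
  let step : Set G₁ × Set G₂ → Set G₁ × Set G₂ := fun p =>
    (p.1 ∪ b '' p.2 ∪ σ₁ p.1, p.2 ∪ a '' p.1 ∪ σ₂ p.2)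
  let C : ℕ → Set G₁ × Set G₂ := fun n => step^[n] (A, ∅)
  have hC : ∀ n, C (n + 1) = step (C n) := fun n => iterate_succ_apply' _ _ _
  have hcount : ∀ n, (C n).1.Countable ∧ (C n).2.Countable := by
    intro n
    induction n with
    | zero => exact ⟨hA, Set.countable_empty⟩
    | succ n ih =>
      rw [hC]
      exact ⟨(ih.1.union (ih.2.image b)).union (hσ₁ _ ih.1).1,
        (ih.2.union (ih.1.image a)).union (hσ₂ _ ih.2).1⟩
  have hmono₁ : Monotone fun n => (C n).1 := monotone_nat_of_le_succ fun n => by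
    rw [hC]; exact Set.subset_union_left.trans Set.subset_union_left
  have hmono₂ : Monotone fun n => (C n).2 := monotone_nat_of_le_succ fun n => by
    rw [hC]; exact Set.subset_union_left.trans Set.subset_union_left
  refine ⟨⋃ n, (C n).1, ⋃ n, (C n).2, Set.countable_iUnion fun n => (hcount n).1,
    Set.countable_iUnion fun n => (hcount n).2, Set.subset_iUnion (fun n => (C n).1) 0,
    fun x hx => ?_, fun x hx => ?_,
    span_iUnion_subset_closure hmono₁ fun n => (hσ₁ _ (hcount n).1).2.trans (closure_mono ?_),
    span_iUnion_subset_closure hmono₂ fun n => (hσ₂ _ (hcount n).2).2.trans (closure_mono ?_)⟩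
  all_goals first
    | obtain ⟨n, hn⟩ := Set.mem_iUnion.1 hx
      exact Set.mem_iUnion.2 ⟨n + 1, by rw [hC]; exact Or.inl (Or.inr ⟨x, hn, rfl⟩)⟩
    | rw [hC]; exact Set.subset_union_right

theorem Submodule.topologicalClosure_span_coe_of_subset {G : Type*} [NormedAddCommGroup G]
    [NormedSpace 𝕜 G] {C : Set G} (hC : (Submodule.span 𝕜 C : Set G) ⊆ closure C) :
    ((Submodule.span 𝕜 C).topologicalClosure : Set G) = closure C := by
  rw [Submodule.topologicalClosure_coe]
  exact (closure_minimal hC isClosed_closure).antisymm (closure_mono Submodule.subset_span)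

theorem IsReflexive.exists_isSeparable_closedComplemented {Y : Type*} [NormedAddCommGroup Y]
    [NormedSpace 𝕜 Y] [CompleteSpace Y] (hY : IsReflexive 𝕜 Y) {A : Set Y} (hA : IsSeparable A) :
    ∃ Z : Submodule 𝕜 Y, IsSeparable (Z : Set Y) ∧ A ⊆ Z ∧ Z.ClosedComplemented := by
  obtain ⟨A₀, hA₀, hAA₀⟩ := hA
  choose ν hν1 hν using exists_dual_vector'' 𝕜 (E := Y)
  choose μ hμ1 hμ using StrongDual.exists_norm_le_two_mul_norm_apply (𝕜 := 𝕜) (F := Y)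
  obtain ⟨C₁, C₂, hC₁, -, hA₀C₁, hνC, hμC, hC₁span, hC₂span⟩ :=
    exists_countable_mapsTo_span_subset_closure (𝕜 := 𝕜) ν μ hA₀
  set Z := (Submodule.span 𝕜 C₁).topologicalClosure
  set W := (Submodule.span 𝕜 C₂).topologicalClosure
  have hZ : (Z : Set Y) = closure C₁ := Submodule.topologicalClosure_span_coe_of_subset hC₁span
  have hW : (W : Set (StrongDual 𝕜 Y)) = closure C₂ :=
    Submodule.topologicalClosure_span_coe_of_subset hC₂span
  have hWZ : IsNorming 1 (W : Set (StrongDual 𝕜 Y)) Z := by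
    rw [hZ]
    refine (IsNorming.of_forall fun z hz => ⟨ν z, ?_, hν1 z, by simp [hν]⟩).closure
    exact hW ▸ subset_closure (hνC hz)
  have hZW : IsNorming 2 (inclusionInDoubleDual 𝕜 Y '' Z) (W : Set (StrongDual 𝕜 Y)) := by
    have hC₂ : IsNorming 2 (inclusionInDoubleDual 𝕜 Y '' Z) C₂ := IsNorming.of_forall fun φ hφ =>
      ⟨_, ⟨μ φ, hZ ▸ subset_closure (hμC hφ), rfl⟩, (double_dual_bound 𝕜 Y _).trans (hμ1 φ),
        by simpa using hμ φ⟩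
    exact hW ▸ hC₂.closure
  refine ⟨Z, hZ ▸ hC₁.isSeparable.closure, hAA₀.trans (hZ ▸ closure_mono hA₀C₁),
    hY.closedComplemented_of_isNorming (Submodule.isClosed_topologicalClosure _)
      (Submodule.isClosed_topologicalClosure _) hWZ hZW⟩

end CountableClosure

section Kernels

variable {F : Type*} [NormedAddCommGroup F] [NormedSpace 𝕜 F]

theorem exists_ker_eq_of_separableSpace_quotient [CompleteSpace F] (hF : ¬FiniteDimensional 𝕜 F)
    {D : Submodule 𝕜 F} (hD : IsClosed (D : Set F)) [SeparableSpace (F ⧸ D)] :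
    ∃ T : F →L[𝕜] F, LinearMap.ker (T : F →ₗ[𝕜] F) = D := by
  have : IsClosed (D : Set F) := hD
  obtain ⟨J, hJ⟩ := exists_injective_of_separableSpace_s8 hF (F ⧸ D)
  refine ⟨J.comp D.mkQL, ?_⟩
  ext x
  simp [map_eq_zero_iff J hJ]

theorem Submodule.ClosedComplemented.exists_ker_eq {Z D : Submodule 𝕜 F}
    (hZ : Z.ClosedComplemented) (hDZ : D ≤ Z) (T₀ : Z →L[𝕜] Z)
    (hT₀ : LinearMap.ker (T₀ : Z →ₗ[𝕜] Z) = D.comap Z.subtype) :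
    ∃ T : F →L[𝕜] F, LinearMap.ker (T : F →ₗ[𝕜] F) = D := by
  obtain ⟨P, hP⟩ := hZ
  refine ⟨ContinuousLinearMap.id 𝕜 F - Z.subtypeL.comp P + Z.subtypeL.comp (T₀.comp P), ?_⟩
  ext x
  have hT₀x : T₀ (P x) = 0 ↔ (P x : F) ∈ D := by
    simpa using SetLike.ext_iff.1 hT₀ (P x)
  simp only [LinearMap.mem_ker, ContinuousLinearMap.coe_coe, add_apply, sub_apply,
    ContinuousLinearMap.id_apply, ContinuousLinearMap.comp_apply, Submodule.subtypeL_apply]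
  constructor
  · intro hx
    have hPx : T₀ (P x) = 0 := by simpa [hP] using congrArg P hx
    rw [hPx, ZeroMemClass.coe_zero, add_zero, sub_eq_zero] at hx
    exact hx ▸ hT₀x.1 hPx
  · intro hx
    have : P x = ⟨x, hDZ hx⟩ := hP ⟨x, hDZ hx⟩
    rw [this] at hT₀x ⊢
    simp [hT₀x.2 hx]

theorem IsReflexive.exists_ker_eq_of_isSeparable [CompleteSpace F] (hF : IsReflexive 𝕜 F)
    (hinf : ¬FiniteDimensional 𝕜 F) {D : Submodule 𝕜 F} (hD : IsClosed (D : Set F))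
    (hDs : IsSeparable (D : Set F)) : ∃ T : F →L[𝕜] F, LinearMap.ker (T : F →ₗ[𝕜] F) = D := by
  obtain ⟨e, ψ, -, hψ⟩ := exists_biorthogonal hinf
  obtain ⟨Z, hZs, hDeZ, hZ⟩ :=
    hF.exists_isSeparable_closedComplemented (hDs.union (Set.countable_range e).isSeparable)
  have : CompleteSpace Z := hZ.isClosed.completeSpace_coe
  have : SeparableSpace Z := hZs.separableSpace
  have hZinf : ¬FiniteDimensional 𝕜 Z :=
    not_finiteDimensional_of_biorthogonal (fun n => ⟨e n, hDeZ (Or.inr ⟨n, rfl⟩)⟩)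
      (fun n => (ψ n).comp Z.subtypeL) fun n m => hψ n m
  have hD' : IsClosed (D.comap Z.subtype : Set Z) := hD.preimage continuous_subtype_val
  have : SeparableSpace (Z ⧸ D.comap Z.subtype) :=
    (Submodule.mkQ_surjective _).denseRange.separableSpace (D.comap Z.subtype).mkQL.continuous
  obtain ⟨T₀, hT₀⟩ := exists_ker_eq_of_separableSpace_quotient hZinf hD'
  exact hZ.exists_ker_eq (fun x hx => hDeZ (Or.inl hx)) T₀ hT₀

end Kernels

section FewOperators

def HasFewOperators (𝕜 Y : Type*) [RCLike 𝕜] [NormedAddCommGroup Y] [NormedSpace 𝕜 Y] : Prop :=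
  ∀ T : Y →L[𝕜] Y, ∃ (α : 𝕜) (S : Y →L[𝕜] Y),
    T = α • ContinuousLinearMap.id 𝕜 Y + S ∧ IsSeparable (Set.range S)

theorem ContinuousLinearMap.ker_smul_id_add_subset_range {E : Type*} [NormedAddCommGroup E]
    [NormedSpace 𝕜 E] {α : 𝕜} (hα : α ≠ 0) (U : E →L[𝕜] E) :
    (LinearMap.ker ((α • ContinuousLinearMap.id 𝕜 E + U : E →L[𝕜] E) : E →ₗ[𝕜] E) : Set E) ⊆
      Set.range U := by
  intro x hx
  refine ⟨-α⁻¹ • x, ?_⟩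
  have hx : α • x + U x = 0 := by simpa using hx
  simp [eq_neg_of_add_eq_zero_right hx, smul_smul, hα]

variable {Y : Type*} [NormedAddCommGroup Y] [NormedSpace 𝕜 Y]

theorem IsReflexive.exists_eq_smul_id_add_dualMap (hY : IsReflexive 𝕜 Y)
    (hfew : HasFewOperators 𝕜 Y) (T : StrongDual 𝕜 Y →L[𝕜] StrongDual 𝕜 Y) :
    ∃ (α : 𝕜) (S : Y →L[𝕜] Y), T = α • ContinuousLinearMap.id 𝕜 _ + S.dualMap ∧
      IsSeparable (Set.range S) := by
  obtain ⟨u, rfl⟩ := hY.exists_dualMap_eq T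
  obtain ⟨α, S, rfl, hS⟩ := hfew u
  exact ⟨α, S, by rw [ContinuousLinearMap.dualMap_smul_add, ContinuousLinearMap.dualMap_id], hS⟩

theorem IsReflexive.isSeparable_or_separableSpace_quotient_iInf_ker (hY : IsReflexive 𝕜 Y)
    (hfew : HasFewOperators 𝕜 Y) {ι : Type*} [Countable ι]
    (T : ι → StrongDual 𝕜 Y →L[𝕜] StrongDual 𝕜 Y) :
    IsSeparable ((⨅ i, LinearMap.ker (T i : StrongDual 𝕜 Y →ₗ[𝕜] StrongDual 𝕜 Y) :
      Submodule 𝕜 (StrongDual 𝕜 Y)) : Set (StrongDual 𝕜 Y)) ∨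
      SeparableSpace (StrongDual 𝕜 Y ⧸
        ⨅ i, LinearMap.ker (T i : StrongDual 𝕜 Y →ₗ[𝕜] StrongDual 𝕜 Y)) := by
  choose α S hT hS using fun i => hY.exists_eq_smul_id_add_dualMap hfew (T i)
  by_cases hα : ∀ i, α i = 0
  · right
    have hker : ⨅ i, LinearMap.ker (T i : StrongDual 𝕜 Y →ₗ[𝕜] StrongDual 𝕜 Y) =
        StrongDual.polarSubmodule 𝕜 (⨆ i, LinearMap.range (S i : Y →ₗ[𝕜] Y)) := by
      ext f
      simp only [hT, hα, ContinuousLinearMap.toLinearMap_add, ContinuousLinearMap.toLinearMap_smul,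
        zero_smul, zero_add, Submodule.mem_iInf, LinearMap.mem_ker, ContinuousLinearMap.coe_coe,
        ContinuousLinearMap.ext_iff, ContinuousLinearMap.dualMap_apply, zero_apply,
        StrongDual.mem_polarSubmodule]
      change _ ↔ _ ≤ LinearMap.ker (f : Y →ₗ[𝕜] 𝕜)
      simp [iSup_le_iff, LinearMap.range_le_ker_iff, LinearMap.ext_iff]
    rw [hker]
    refine hY.separableSpace_quotient_polarSubmodule ?_
    rw [Submodule.iSup_eq_span]
    exact (IsSeparable.iUnion hS).span
  · obtain ⟨i, hi⟩ := not_forall.1 hα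
    left
    refine (hY.isSeparable_range_dualMap (hS i)).mono fun f hf =>
      ContinuousLinearMap.ker_smul_id_add_subset_range hi _ ?_
    rw [← hT i]
    exact (Submodule.mem_iInf _).1 hf i

end FewOperators

end

theorem kernel_characterisation_in_dual_of_space_with_few_operators_general
    (X : Type*) [NormedAddCommGroup X] [NormedSpace ℂ X]
    (hnonsep : ¬ SeparableSpace X)
    (hrefl : Function.Surjective (inclusionInDoubleDual ℂ X))
    (hfew : ∀ T : X →L[ℂ] X, ∃ (α : ℂ) (S : X →L[ℂ] X),
      T = α • ContinuousLinearMap.id ℂ X + S ∧ IsSeparable (Set.range S))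
    (D : Submodule ℂ (StrongDual ℂ X)) (hD : IsClosed (D : Set (StrongDual ℂ X))) :
    ((IsSeparable (D : Set (StrongDual ℂ X)) ∨ SeparableSpace (StrongDual ℂ X ⧸ D)) ↔
        (∃ T : StrongDual ℂ X →L[ℂ] StrongDual ℂ X, LinearMap.ker (T : StrongDual ℂ X →ₗ[ℂ] StrongDual ℂ X) = D)) ∧
      ((∃ T : StrongDual ℂ X →L[ℂ] StrongDual ℂ X, LinearMap.ker (T : StrongDual ℂ X →ₗ[ℂ] StrongDual ℂ X) = D) ↔
        (∃ n : ℕ, 0 < n ∧ ∃ T : Fin n → (StrongDual ℂ X →L[ℂ] StrongDual ℂ X),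
          D = ⨅ i, LinearMap.ker (T i : StrongDual ℂ X →ₗ[ℂ] StrongDual ℂ X))) := by
  have hE : IsReflexive ℂ (StrongDual ℂ X) := IsReflexive.strongDual hrefl
  have hEinf : ¬FiniteDimensional ℂ (StrongDual ℂ X) := fun _ =>
    hnonsep (separableSpace_of_separableSpace_strongDual (𝕜 := ℂ))
  have hab : IsSeparable (D : Set (StrongDual ℂ X)) ∨ SeparableSpace (StrongDual ℂ X ⧸ D) →
      ∃ T : StrongDual ℂ X →L[ℂ] StrongDual ℂ X,
        LinearMap.ker (T : StrongDual ℂ X →ₗ[ℂ] StrongDual ℂ X) = D := by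
    rintro (hDs | hDq)
    · exact hE.exists_ker_eq_of_isSeparable hEinf hD hDs
    · exact exists_ker_eq_of_separableSpace_quotient hEinf hD
  have hca : ∀ (n : ℕ) (T : Fin n → StrongDual ℂ X →L[ℂ] StrongDual ℂ X),
      D = ⨅ i, LinearMap.ker (T i : StrongDual ℂ X →ₗ[ℂ] StrongDual ℂ X) →
        IsSeparable (D : Set (StrongDual ℂ X)) ∨ SeparableSpace (StrongDual ℂ X ⧸ D) := by
    rintro n T rfl
    exact IsReflexive.isSeparable_or_separableSpace_quotient_iInf_ker hrefl hfew T
  refine ⟨⟨hab, fun ⟨T, hT⟩ => hca 1 (fun _ => T) (by rw [iInf_const, hT])⟩,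
    fun ⟨T, hT⟩ => ⟨1, one_pos, fun _ => T, by rw [iInf_const, hT]⟩,
    fun ⟨n, _, T, hT⟩ => hab (hca n T hT)⟩

/-- **Theorem 2.1.** Let `X` be a non-separable, reflexive complex Banach space with few
operators, and let `E = X'` be its dual. For a closed linear subspace `D` of `E` the following
are equivalent: (a) either `D` or `E/D` is separable; (b) `D = ker T` for some bounded operator
`T` on `E`; (c) `D = ⋂_{i=1}^n ker T_i` for some `n ≥ 1` and bounded operators `T_i` on `E`. -/
theorem kernel_characterisation_in_dual_of_space_with_few_operators
    (X : Type*) [NormedAddCommGroup X] [NormedSpace ℂ X] [CompleteSpace X]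
    (hnonsep : ¬ SeparableSpace X)
    (hrefl : Function.Surjective (inclusionInDoubleDual ℂ X))
    (hfew : ∀ T : X →L[ℂ] X, ∃ (α : ℂ) (S : X →L[ℂ] X),
      T = α • ContinuousLinearMap.id ℂ X + S ∧ IsSeparable (Set.range S))
    (D : Submodule ℂ (StrongDual ℂ X)) (hD : IsClosed (D : Set (StrongDual ℂ X))) :
    ((IsSeparable (D : Set (StrongDual ℂ X)) ∨ SeparableSpace (StrongDual ℂ X ⧸ D)) ↔
        (∃ T : StrongDual ℂ X →L[ℂ] StrongDual ℂ X, LinearMap.ker (T : StrongDual ℂ X →ₗ[ℂ] StrongDual ℂ X) = D)) ∧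
      ((∃ T : StrongDual ℂ X →L[ℂ] StrongDual ℂ X, LinearMap.ker (T : StrongDual ℂ X →ₗ[ℂ] StrongDual ℂ X) = D) ↔
        (∃ n : ℕ, 0 < n ∧ ∃ T : Fin n → (StrongDual ℂ X →L[ℂ] StrongDual ℂ X),
          D = ⨅ i, LinearMap.ker (T i : StrongDual ℂ X →ₗ[ℂ] StrongDual ℂ X))) :=
  kernel_characterisation_in_dual_of_space_with_few_operators_general X hnonsep hrefl hfew D hD
end

section
/- Let X be a non-separable, reflexive complex Banach space with few operators, i.e. every bounded linear operator T : X → X can be written as T = α·id_X + S with α ∈ ℂ and S a bounded operator with separable range. Let E = X' and let D be a closed linear subspace of E such that D = ⋂_{i=1}^n ker T_i for some n ∈ ℕ and bounded linear operators T_1, …, T_n : E → E. Then either D is separable or E/D is separable. -/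
/-!
Reflexivity makes each `T i` the adjoint of an operator `S i` on `X`, and since `X` has few
operators, `S i = α i • id + K i` with `K i` of separable range.

If some `α i ≠ 0`, every `f ∈ D` satisfies `f = f ∘ (-(α i)⁻¹ • K i)`. Every functional on `D` is,
by Hahn–Banach and reflexivity, evaluation at a point of `X`, hence at a point of the separable
set `range (-(α i)⁻¹ • K i)`; so `D'` is separable, and then so is `D`.

If all `α i = 0`, then `D` is the annihilator of the separable set `⋃ i, range (K i)`. The map
`φ ↦ φ ∘ mkQ` embeds `(E ⧸ D)'` isometrically into `E' = X`, with image inside the closed span of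
that set; so `(E ⧸ D)'` is separable, and then so is `E ⧸ D`.
-/
open NormedSpace TopologicalSpace Topology Set Filter

theorem Submodule.norm_le_norm_comp_mkQL {𝕜 E F : Type*} [NontriviallyNormedField 𝕜]
    [SeminormedAddCommGroup E] [NormedSpace 𝕜 E] [SeminormedAddCommGroup F] [NormedSpace 𝕜 F]
    (D : Submodule 𝕜 E) (φ : E ⧸ D →L[𝕜] F) : ‖φ‖ ≤ ‖φ.comp D.mkQL‖ := by
  refine φ.opNorm_le_bound (norm_nonneg _) fun q ↦ ?_
  have hle : ∀ ε > 0, ‖φ q‖ ≤ ‖φ.comp D.mkQL‖ * (‖q‖ + ε) := fun ε hε ↦ by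
    obtain ⟨f, rfl, hf⟩ := Submodule.Quotient.norm_mk_lt q hε
    exact ((φ.comp D.mkQL).le_opNorm f).trans (by gcongr)
  have hlim : Tendsto (fun ε ↦ ‖φ.comp D.mkQL‖ * (‖q‖ + ε)) (𝓝[>] 0)
      (𝓝 (‖φ.comp D.mkQL‖ * ‖q‖)) :=
    ((continuous_const.mul (continuous_const.add continuous_id)).tendsto' 0 _ (by simp)).mono_left
      nhdsWithin_le_nhds
  exact ge_of_tendsto hlim (eventually_nhdsWithin_of_forall hle)

theorem mem_topologicalClosure_span_of_forall_strongDual {𝕜 E : Type*} [RCLike 𝕜]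
    [SeminormedAddCommGroup E] [NormedSpace 𝕜 E] {s : Set E} {x : E}
    (h : ∀ f : StrongDual 𝕜 E, (∀ y ∈ s, f y = 0) → f x = 0) :
    x ∈ (Submodule.span 𝕜 s).topologicalClosure := by
  set M := (Submodule.span 𝕜 s).topologicalClosure
  have : IsClosed (M : Set E) := Submodule.isClosed_topologicalClosure _
  by_contra hx
  have hπx : ‖M.mkQ x‖ ≠ 0 := by simpa using hx
  obtain ⟨g, -, hgx⟩ := exists_dual_vector 𝕜 (M.mkQ x) hπx
  have hM : ∀ y ∈ s, M.mkQ y = 0 := fun y hy ↦ (Submodule.Quotient.mk_eq_zero M).2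
    ((Submodule.span 𝕜 s).le_topologicalClosure (Submodule.subset_span hy))
  have hgx0 := h (g.comp M.mkQL) (fun y hy ↦ by simp [hM y hy])
  rw [ContinuousLinearMap.comp_apply, Submodule.mkQL_apply, hgx] at hgx0
  exact hπx (by exact_mod_cast hgx0)

theorem separableSpace_of_separableSpace_strongDual_s9 {𝕜 E : Type*} [RCLike 𝕜]
    [NormedAddCommGroup E] [NormedSpace 𝕜 E] [SeparableSpace (StrongDual 𝕜 E)] :
    SeparableSpace E := by
  obtain ⟨c, hc, hdense⟩ := exists_countable_dense (StrongDual 𝕜 E)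
  have hnorming : ∀ f : StrongDual 𝕜 E, ∃ x : E, ‖x‖ ≤ 1 ∧ ‖f‖ / 2 ≤ ‖f x‖ := fun f ↦ by
    rcases (norm_nonneg f).eq_or_lt' with hf | hf
    · exact ⟨0, by simp [hf]⟩
    · obtain ⟨x, hx, hfx⟩ := f.exists_lt_apply_of_lt_opNorm (half_lt_self hf)
      exact ⟨x, hx.le, hfx.le⟩
  choose ξ hξ_norm hξ_apply using hnorming
  have hzero : ∀ f : StrongDual 𝕜 E, (∀ y ∈ ξ '' c, f y = 0) → f = 0 := by
    intro f hf
    have hclose : ∀ g ∈ c, ‖f‖ ≤ 3 * ‖f - g‖ := fun g hg ↦ by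
      have : ‖g (ξ g)‖ ≤ ‖f - g‖ := by
        calc ‖g (ξ g)‖ = ‖(f - g) (ξ g)‖ := by simp [hf _ (mem_image_of_mem ξ hg)]
          _ ≤ ‖f - g‖ * ‖ξ g‖ := (f - g).le_opNorm _
          _ ≤ ‖f - g‖ := mul_le_of_le_one_right (norm_nonneg _) (hξ_norm g)
      linarith [norm_le_norm_add_norm_sub' f g, hξ_apply g, norm_sub_rev f g]
    refine norm_le_zero_iff.1 (le_of_forall_pos_le_add fun ε hε ↦ ?_)
    obtain ⟨g, hg, hfg⟩ := Metric.mem_closure_iff.1 (hdense.closure_eq ▸ mem_univ f) (ε / 3)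
      (by positivity)
    rw [dist_eq_norm] at hfg
    linarith [hclose g hg]
  have hsep : IsSeparable ((Submodule.span 𝕜 (ξ '' c)).topologicalClosure : Set E) := by
    rw [Submodule.topologicalClosure_coe]
    exact (hc.image ξ).isSeparable.span.closure
  refine isSeparable_univ_iff.1 (hsep.mono fun x _ ↦ ?_)
  exact mem_topologicalClosure_span_of_forall_strongDual fun f hf ↦ by simp [hzero f hf]

theorem Topology.IsInducing.separableSpace_of_isSeparable_range {α β : Type*}
    [TopologicalSpace α] [TopologicalSpace β] [PseudoMetrizableSpace β] {f : α → β}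
    (hf : IsInducing f) (hrange : IsSeparable (range f)) : SeparableSpace α :=
  have := hrange.secondCountableTopology
  have hf' : IsInducing (rangeFactorization f) := IsInducing.subtypeVal.of_comp_iff.1 hf
  have := hf'.secondCountableTopology
  inferInstance

section Reflexive

variable {𝕜 X : Type*} [RCLike 𝕜] [NormedAddCommGroup X] [NormedSpace 𝕜 X]

theorem exists_eq_apply_of_surjective_inclusionInDoubleDual
    (hrefl : Function.Surjective (inclusionInDoubleDual 𝕜 X)) (D : Submodule 𝕜 (StrongDual 𝕜 X))
    (φ : StrongDual 𝕜 D) : ∃ x : X, ∀ f : D, φ f = (f : StrongDual 𝕜 X) x := by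
  obtain ⟨G, hG, -⟩ := exists_extension_norm_eq D φ
  obtain ⟨x, rfl⟩ := hrefl G
  exact ⟨x, fun f ↦ (hG f).symm⟩

theorem exists_preadjoint_of_surjective_inclusionInDoubleDual
    (hrefl : Function.Surjective (inclusionInDoubleDual 𝕜 X))
    (T : StrongDual 𝕜 X →L[𝕜] StrongDual 𝕜 X) :
    ∃ S : X →L[𝕜] X, ∀ g x, g (S x) = T g x := by
  let J := LinearIsometryEquiv.ofSurjective (inclusionInDoubleDualLi 𝕜) hrefl
  refine ⟨(J.symm : _ →L[𝕜] X).comp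
    ((ContinuousLinearMap.precomp 𝕜 T).comp (inclusionInDoubleDual 𝕜 X)), fun g x ↦ ?_⟩
  change J (J.symm _) g = _
  rw [J.apply_symm_apply]
  rfl

theorem isSeparable_of_forall_comp_eq_self
    (hrefl : Function.Surjective (inclusionInDoubleDual 𝕜 X))
    {D : Submodule 𝕜 (StrongDual 𝕜 X)} {K : X →L[𝕜] X} (hK : IsSeparable (range K))
    (hD : ∀ f ∈ D, f.comp K = f) : IsSeparable (D : Set (StrongDual 𝕜 X)) := by
  -- instance diamond: without this local instance no topology is found on `StrongDual 𝕜 D`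
  let _ : AddCommGroup (StrongDual 𝕜 X) := ContinuousLinearMap.addCommGroup
  let ρ : X →L[𝕜] StrongDual 𝕜 D :=
    (ContinuousLinearMap.precomp 𝕜 D.subtypeL).comp (inclusionInDoubleDual 𝕜 X)
  have : SeparableSpace (StrongDual 𝕜 D) := by
    refine isSeparable_univ_iff.1 ((hK.image ρ.continuous).mono fun φ _ ↦ ?_)
    obtain ⟨x, hx⟩ := exists_eq_apply_of_surjective_inclusionInDoubleDual hrefl D φ
    refine ⟨K x, mem_range_self x, ContinuousLinearMap.ext fun f ↦ ?_⟩
    rw [hx, ← hD f f.2]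
    rfl
  have := separableSpace_of_separableSpace_strongDual_s9 (𝕜 := 𝕜) (E := D)
  exact IsSeparable.of_subtype _

theorem separableSpace_quotient_of_annihilator_le
    (hrefl : Function.Surjective (inclusionInDoubleDual 𝕜 X))
    {D : Submodule 𝕜 (StrongDual 𝕜 X)} (hD : IsClosed (D : Set (StrongDual 𝕜 X)))
    {s : Set X} (hs : IsSeparable s) (hann : ∀ f : StrongDual 𝕜 X, (∀ y ∈ s, f y = 0) → f ∈ D) :
    SeparableSpace (StrongDual 𝕜 X ⧸ D) := by
  -- as above, for the norm on `StrongDual 𝕜 (StrongDual 𝕜 X ⧸ D)`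
  let _ : NormedAddCommGroup (StrongDual 𝕜 X) := ContinuousLinearMap.toNormedAddCommGroup
  let ψ : StrongDual 𝕜 (StrongDual 𝕜 X ⧸ D) →L[𝕜] StrongDual 𝕜 (StrongDual 𝕜 X) :=
    ContinuousLinearMap.precomp 𝕜 D.mkQL
  have hψ : AntilipschitzWith 1 ψ := AddMonoidHomClass.antilipschitz_of_bound ψ fun φ ↦ by
    simpa [ψ] using D.norm_le_norm_comp_mkQL φ
  have hrange : range ψ ⊆
      inclusionInDoubleDual 𝕜 X '' (Submodule.span 𝕜 s).topologicalClosure := by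
    rintro _ ⟨φ, rfl⟩
    obtain ⟨x, hx⟩ := hrefl (ψ φ)
    refine ⟨x, mem_topologicalClosure_span_of_forall_strongDual fun f hf ↦ ?_, hx⟩
    rw [← dual_def 𝕜 X x f, hx]
    simp [ψ, (Submodule.Quotient.mk_eq_zero D).2 (hann f hf)]
  have hsep : IsSeparable (range ψ) := by
    refine (IsSeparable.image ?_ (inclusionInDoubleDual 𝕜 X).continuous).mono hrange
    rw [Submodule.topologicalClosure_coe]
    exact hs.span.closure
  have : IsClosed (D : Set (StrongDual 𝕜 X)) := hD
  have := (hψ.isInducing ψ.continuous).separableSpace_of_isSeparable_range hsep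
  exact separableSpace_of_separableSpace_strongDual_s9 (𝕜 := 𝕜)

end Reflexive

theorem separable_or_separable_quotient_of_finite_intersection_of_kernels_general
    (X : Type*) [NormedAddCommGroup X] [NormedSpace ℂ X]
    (hrefl : Function.Surjective (inclusionInDoubleDual ℂ X))
    (hfew : ∀ T : X →L[ℂ] X, ∃ (α : ℂ) (S : X →L[ℂ] X),
      T = α • ContinuousLinearMap.id ℂ X + S ∧ IsSeparable (Set.range S))
    (D : Submodule ℂ (StrongDual ℂ X)) (hD : IsClosed (D : Set (StrongDual ℂ X)))
    (n : ℕ) (T : Fin n → (StrongDual ℂ X →L[ℂ] StrongDual ℂ X))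
    (hker : D = ⨅ i, LinearMap.ker (T i : StrongDual ℂ X →ₗ[ℂ] StrongDual ℂ X)) :
    IsSeparable (D : Set (StrongDual ℂ X)) ∨ SeparableSpace (StrongDual ℂ X ⧸ D) := by
  choose S hS using fun i ↦ exists_preadjoint_of_surjective_inclusionInDoubleDual hrefl (T i)
  choose α K hSK hK using fun i ↦ hfew (S i)
  have hT : ∀ i g x, T i g x = α i * g x + g (K i x) := fun i g x ↦ by
    simp [← hS, hSK]
  have hmem : ∀ f, f ∈ D ↔ ∀ i, T i f = 0 := by simp [hker, Submodule.mem_iInf]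
  by_cases hα : ∃ i, α i ≠ 0
  · obtain ⟨i, hi⟩ := hα
    refine .inl (isSeparable_of_forall_comp_eq_self hrefl (K := -(α i)⁻¹ • K i)
      (((hK i).image (continuous_const_smul (-(α i)⁻¹))).mono ?_) fun f hf ↦ ?_)
    · rintro _ ⟨x, rfl⟩
      exact ⟨K i x, mem_range_self x, rfl⟩
    · have hKx : ∀ x, f (K i x) = -(α i * f x) := fun x ↦ by
        have := congr($((hmem f).1 hf i) x)
        rw [hT, zero_apply] at this
        linear_combination this
      ext x
      simp [hKx, hi]
  · push Not at hα
    refine .inr (separableSpace_quotient_of_annihilator_le hrefl hD (.iUnion fun i ↦ hK i)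
      fun f hf ↦ (hmem f).2 fun i ↦ ?_)
    ext x
    simp [hT, hα i, hf _ (mem_iUnion.2 ⟨i, x, rfl⟩)]

/-- Let `X` be a non-separable, reflexive complex Banach space with few operators, let
`E = X'`, and let `D` be a closed linear subspace of `E` which is a finite intersection
`⋂_{i=1}^n ker T_i` of kernels of bounded operators on `E`. Then either `D` or `E/D` is
separable. -/
theorem separable_or_separable_quotient_of_finite_intersection_of_kernels
    (X : Type*) [NormedAddCommGroup X] [NormedSpace ℂ X] [CompleteSpace X]
    (hnonsep : ¬ SeparableSpace X)
    (hrefl : Function.Surjective (inclusionInDoubleDual ℂ X))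
    (hfew : ∀ T : X →L[ℂ] X, ∃ (α : ℂ) (S : X →L[ℂ] X),
      T = α • ContinuousLinearMap.id ℂ X + S ∧ IsSeparable (Set.range S))
    (D : Submodule ℂ (StrongDual ℂ X)) (hD : IsClosed (D : Set (StrongDual ℂ X)))
    (n : ℕ) (hn : 0 < n) (T : Fin n → (StrongDual ℂ X →L[ℂ] StrongDual ℂ X))
    (hker : D = ⨅ i, LinearMap.ker (T i : StrongDual ℂ X →ₗ[ℂ] StrongDual ℂ X)) :
    IsSeparable (D : Set (StrongDual ℂ X)) ∨ SeparableSpace (StrongDual ℂ X ⧸ D) :=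
  separable_or_separable_quotient_of_finite_intersection_of_kernels_general X hrefl hfew D hD n T
    hker
end

section
/- Let E be an infinite-dimensional complex Banach space and let F be a closed linear subspace of E. If (λ_n) is a sequence in the unit ball of the annihilator F^⊥ ⊆ E' that is weak*-dense in the unit ball of F^⊥, and (b_n) is a normalised basic sequence in E, then the operator T = Σ_{n=1}^∞ 2^{−n} |b_n⟩⟨λ_n| (i.e. T y = Σ_n 2^{−n} λ_n(y) b_n) is a well-defined bounded linear operator on E with ker T = F. -/
open NormedSpace TopologicalSpace

/-- Coefficients of a basic sequence (Grünblum criterion) summing to zero all vanish. -/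
theorem aux_basic_seq_coeff_zero (E : Type*) [NormedAddCommGroup E] [NormedSpace ℂ E]
    (b : ℕ → E) (hb_norm : ∀ n, ‖b n‖ = 1)
    (C : ℝ)
    (hC : ∀ (c : ℕ → ℂ) (m N : ℕ), m ≤ N →
      ‖∑ i ∈ Finset.range m, c i • b i‖ ≤ C * ‖∑ i ∈ Finset.range N, c i • b i‖)
    (c : ℕ → ℂ) (hs : HasSum (fun n => c n • b n) 0) : ∀ n, c n = 0 := by
  have htend := hs.tendsto_sum_nat
  have hP : ∀ m, ∑ i ∈ Finset.range m, c i • b i = 0 := by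
    intro m
    have h1 : Filter.Tendsto (fun N => C * ‖∑ i ∈ Finset.range N, c i • b i‖)
        Filter.atTop (nhds (C * ‖(0 : E)‖)) :=
      ((continuous_norm.tendsto _).comp htend).const_mul C
    have h2 : ‖∑ i ∈ Finset.range m, c i • b i‖ ≤ C * ‖(0 : E)‖ := by
      refine ge_of_tendsto h1 ?_
      filter_upwards [Filter.eventually_ge_atTop m] with N hN
      exact hC c m N hN
    simp only [norm_zero, mul_zero] at h2
    exact norm_le_zero_iff.mp h2
  intro n
  have h3 : c n • b n = 0 := by
    have := hP (n + 1)
    rw [Finset.sum_range_succ, hP n, zero_add] at this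
    exact this
  rcases smul_eq_zero.mp h3 with h | h
  · exact h
  · exfalso; have := hb_norm n; rw [h, norm_zero] at this; norm_num at this

/-- Density argument: if all `lam n` vanish at `y`, then `y ∈ F`. -/
theorem aux_dense_ann_mem (E : Type*) [NormedAddCommGroup E] [NormedSpace ℂ E] [CompleteSpace E]
    (F : Submodule ℂ E) (hF : IsClosed (F : Set E))
    (lam : ℕ → StrongDual ℂ E)
    (hlam_dense : ∀ μ : StrongDual ℂ E, ‖μ‖ ≤ 1 → (∀ x ∈ F, μ x = 0) →
      StrongDual.toWeakDual μ ∈ closure (Set.range fun n => StrongDual.toWeakDual (lam n)))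
    (y : E) (hy : ∀ n, lam n y = 0) : y ∈ F := by
  by_contra hyF
  haveI := hF
  have hne : (Submodule.Quotient.mk y : E ⧸ F) ≠ 0 := by
    simpa [Submodule.Quotient.mk_eq_zero] using hyF
  obtain ⟨g, hg1, hgy⟩ := exists_dual_vector ℂ (Submodule.Quotient.mk y : E ⧸ F) (norm_ne_zero_iff.mpr hne)
  let Q : E →L[ℂ] E ⧸ F :=
    LinearMap.mkContinuous F.mkQ 1 (fun x => by
      simpa using Submodule.Quotient.norm_mk_le F x)
  set μ : StrongDual ℂ E := g.comp Q with hμ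
  have hμ1 : ‖μ‖ ≤ 1 := by
    calc ‖g.comp Q‖ ≤ ‖g‖ * ‖Q‖ := ContinuousLinearMap.opNorm_comp_le _ _
      _ ≤ 1 * 1 := by
        refine mul_le_mul (le_of_eq hg1) ?_ (norm_nonneg Q) zero_le_one
        exact LinearMap.mkContinuous_norm_le _ zero_le_one _
      _ = 1 := one_mul 1
  have hμF : ∀ x ∈ F, μ x = 0 := by
    intro x hx
    have : Q x = 0 := by
      simpa [Q, LinearMap.mkContinuous_apply, Submodule.Quotient.mk_eq_zero] using hx
    simp [hμ, ContinuousLinearMap.comp_apply, this]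
  have hμy : μ y ≠ 0 := by
    simp only [hμ, ContinuousLinearMap.comp_apply]
    rw [show Q y = (Submodule.Quotient.mk y : E ⧸ F) from rfl, hgy]
    simpa [norm_eq_zero] using hne
  have hcl := hlam_dense μ hμ1 hμF
  rw [mem_closure_iff] at hcl
  have hopen : IsOpen ((fun f : WeakDual ℂ E => f y) ⁻¹' Metric.ball (μ y) ‖μ y‖) :=
    (WeakDual.eval_continuous y).isOpen_preimage _ Metric.isOpen_ball
  have hmem : StrongDual.toWeakDual μ ∈ (fun f : WeakDual ℂ E => f y) ⁻¹' Metric.ball (μ y) ‖μ y‖ := by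
    simp only [Set.mem_preimage, Metric.mem_ball]
    rw [show (StrongDual.toWeakDual μ) y = μ y from rfl, dist_self]
    exact norm_pos_iff.mpr hμy
  obtain ⟨f, hf1, n, hn⟩ := hcl _ hopen hmem
  rw [← hn] at hf1
  simp only [Set.mem_preimage, Metric.mem_ball] at hf1
  rw [show (StrongDual.toWeakDual (lam n)) y = lam n y from rfl, hy n] at hf1
  rw [dist_eq_norm, zero_sub, norm_neg] at hf1
  exact absurd hf1 (lt_irrefl _)

/-- The construction in the proof of Proposition 2.0: let `E` be an infinite-dimensional
complex Banach space, `F` a closed linear subspace, `(λ_n)` a sequence in the unit ball of the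
annihilator `F^⊥` which is weak*-dense in that unit ball, and `(b_n)` a normalised basic
sequence in `E` (normalised, and satisfying Grünblum's criterion: the basis projections on the
linear span are uniformly bounded). Then `T = ∑_n 2^{-n} |b_n⟩⟨λ_n|`, i.e.
`T y = ∑_n 2^{-n} λ_n(y) b_n` (here indexed over `n ∈ ℕ` with weight `2^{-(n+1)}`), is a
well-defined bounded linear operator on `E` with `ker T = F`. -/
theorem rank_one_series_operator_has_kernel
    (E : Type*) [NormedAddCommGroup E] [NormedSpace ℂ E] [CompleteSpace E]
    (hinf : ¬ FiniteDimensional ℂ E)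
    (F : Submodule ℂ E) (hF : IsClosed (F : Set E))
    (lam : ℕ → StrongDual ℂ E)
    (hlam_ball : ∀ n, ‖lam n‖ ≤ 1)
    (hlam_ann : ∀ n, ∀ x ∈ F, lam n x = 0)
    (hlam_dense : ∀ μ : StrongDual ℂ E, ‖μ‖ ≤ 1 → (∀ x ∈ F, μ x = 0) →
      StrongDual.toWeakDual μ ∈ closure (Set.range fun n => StrongDual.toWeakDual (lam n)))
    (b : ℕ → E)
    (hb_norm : ∀ n, ‖b n‖ = 1)
    (hb_basic : ∃ C : ℝ, 1 ≤ C ∧ ∀ (c : ℕ → ℂ) (m N : ℕ), m ≤ N →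
      ‖∑ i ∈ Finset.range m, c i • b i‖ ≤ C * ‖∑ i ∈ Finset.range N, c i • b i‖) :
    ∃ T : E →L[ℂ] E,
      (∀ y : E, HasSum (fun n : ℕ => ((2 : ℂ) ^ (n + 1))⁻¹ • lam n y • b n) (T y)) ∧
      LinearMap.ker (T : E →ₗ[ℂ] E) = F := by
  obtain ⟨C, hC1, hC⟩ := hb_basic
  set S : ℕ → (E →L[ℂ] E) := fun n => ((2 : ℂ) ^ (n + 1))⁻¹ • (lam n).smulRight (b n) with hS
  have hSnorm : ∀ n, ‖S n‖ ≤ (1/2 : ℝ) ^ (n + 1) := by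
    intro n
    simp only [hS]
    rw [norm_smul ((2:ℂ)^(n+1))⁻¹ (ContinuousLinearMap.smulRight (lam n) (b n)),
      ContinuousLinearMap.norm_smulRight_apply, hb_norm n, mul_one]
    have : ‖((2 : ℂ) ^ (n + 1))⁻¹‖ = ((2 : ℝ) ^ (n + 1))⁻¹ := by
      rw [norm_inv, norm_pow]; norm_num
    rw [this]
    have h2 : ((2 : ℝ) ^ (n + 1))⁻¹ = (1/2 : ℝ) ^ (n + 1) := by
      rw [one_div, inv_pow]
    rw [h2]
    nlinarith [pow_pos (by norm_num : (0:ℝ) < 1/2) (n+1), hlam_ball n,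
      (lam n).opNorm_nonneg, pow_nonneg (by norm_num : (0:ℝ) ≤ 1/2) (n+1)]
  have hsumS : Summable S := by
    refine Summable.of_norm_bounded ?_ hSnorm
    simpa [pow_succ] using summable_geometric_two.mul_right (1/2 : ℝ)
  have hHas : ∀ y : E, HasSum (fun n : ℕ => ((2 : ℂ) ^ (n + 1))⁻¹ • lam n y • b n)
      ((∑' n, S n) y) := by
    intro y
    have h := (ContinuousLinearMap.apply ℂ E y).hasSum hsumS.hasSum
    simpa [hS, ContinuousLinearMap.smul_apply, ContinuousLinearMap.smulRight_apply] using h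
  refine ⟨∑' n, S n, hHas, ?_⟩
  ext y
  simp only [LinearMap.mem_ker, ContinuousLinearMap.coe_coe]
  constructor
  · intro hTy
    have hs0 : HasSum (fun n : ℕ => (((2 : ℂ) ^ (n + 1))⁻¹ * lam n y) • b n) 0 := by
      have := hHas y
      rw [hTy] at this
      simpa [smul_smul] using this
    have hcoef := aux_basic_seq_coeff_zero E b hb_norm C hC _ hs0
    have hlamy : ∀ n, lam n y = 0 := by
      intro n
      have := hcoef n
      rcases mul_eq_zero.mp this with h | h
      · exfalso
        exact (inv_ne_zero (pow_ne_zero _ (two_ne_zero))) h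
      · exact h
    exact aux_dense_ann_mem E F hF lam hlam_dense y hlamy
  · intro hyF
    have h0 : HasSum (fun n : ℕ => ((2 : ℂ) ^ (n + 1))⁻¹ • lam n y • b n) 0 := by
      have : (fun n : ℕ => ((2 : ℂ) ^ (n + 1))⁻¹ • lam n y • b n) = fun _ => (0 : E) := by
        funext n
        rw [hlam_ann n y hyF]
        simp
      rw [this]
      exact hasSum_zero
    exact (hHas y).unique h0
end

section
/- Let E be a complex Banach space with few operators, in the sense that every bounded linear operator T : E → E can be written as T = α·id_E + S for some α ∈ ℂ and some bounded operator S with separable range. If T_1, …, T_n ∈ B(E) are such that in the decompositions T_i = α_i·id_E + S_i at least one α_i is nonzero (say α_1 ≠ 0), then E = F + closure(im S_1) where F = closure(im T_1 + ⋯ + im T_n), and consequently the quotient E/F is separable. -/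
open TopologicalSpace

theorem LinearMap.range_sup_range_eq_top_of_eq_smul_add {K E : Type*} [DivisionRing K]
    [AddCommGroup E] [Module K E] {T S : E →ₗ[K] E} {a : K} (ha : a ≠ 0)
    (hT : ∀ x, T x = a • x + S x) :
    LinearMap.range T ⊔ LinearMap.range S = ⊤ := by
  refine eq_top_iff.2 fun x _ => ?_
  have hx : x = a⁻¹ • T x + (-a⁻¹) • S x := by
    rw [hT, smul_add, smul_smul, inv_mul_cancel₀ ha, one_smul, neg_smul, add_neg_cancel_right]
  rw [hx]
  exact Submodule.add_mem_sup (Submodule.smul_mem _ _ ⟨x, rfl⟩) (Submodule.smul_mem _ _ ⟨x, rfl⟩)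

theorem Submodule.separableSpace_quotient_of_sup_eq_top {R E : Type*} [Ring R]
    [AddCommGroup E] [Module R E] [TopologicalSpace E] {F G : Submodule R E}
    (hFG : F ⊔ G = ⊤) (hG : IsSeparable (G : Set E)) : SeparableSpace (E ⧸ F) := by
  have himage : F.mkQ '' (G : Set E) = Set.univ := by
    rw [← Submodule.map_coe, (Submodule.map_mkQ_eq_top F G).2 hFG, Submodule.top_coe]
  exact isSeparable_univ_iff.1 (himage ▸ hG.image continuous_quot_mk)

theorem separable_quotient_of_nonzero_scalar_part_general
    (E : Type*) [NormedAddCommGroup E] [NormedSpace ℂ E]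
    (n : ℕ)
    (T S : Fin n → (E →L[ℂ] E)) (α : Fin n → ℂ)
    (hdecomp : ∀ i, T i = α i • ContinuousLinearMap.id ℂ E + S i)
    (hSsep : ∀ i, IsSeparable (Set.range (S i)))
    (i₀ : Fin n) (hα : α i₀ ≠ 0)
    (F : Submodule ℂ E) (hF : F = (⨆ i, LinearMap.range (T i : E →ₗ[ℂ] E)).topologicalClosure) :
    F ⊔ (LinearMap.range (S i₀ : E →ₗ[ℂ] E)).topologicalClosure = ⊤ ∧
      SeparableSpace (E ⧸ F) := by
  have hTF : LinearMap.range (T i₀ : E →ₗ[ℂ] E) ≤ F :=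
    hF ▸ (le_iSup (fun i => LinearMap.range (T i : E →ₗ[ℂ] E)) i₀).trans
      (Submodule.le_topologicalClosure _)
  have hsup : F ⊔ (LinearMap.range (S i₀ : E →ₗ[ℂ] E)).topologicalClosure = ⊤ :=
    top_unique <| (LinearMap.range_sup_range_eq_top_of_eq_smul_add hα
      (fun x => by simp [hdecomp i₀])).ge.trans
      (sup_le_sup hTF (Submodule.le_topologicalClosure _))
  refine ⟨hsup, Submodule.separableSpace_quotient_of_sup_eq_top hsup ?_⟩
  rw [Submodule.topologicalClosure_coe, LinearMap.coe_range, ContinuousLinearMap.coe_coe]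
  exact (hSsep i₀).closure

/-- The second case in the proof of Proposition 2.5.6: let `E` be a complex Banach space with
few operators, and let `T_1, …, T_n ∈ B(E)` have decompositions `T_i = α_i·id + S_i` with each
`S_i` of separable range and some `α_{i₀} ≠ 0`. Then `E = F + closure(im S_{i₀})`, where
`F = closure(im T_1 + ⋯ + im T_n)`, and consequently `E/F` is separable. -/
theorem separable_quotient_of_nonzero_scalar_part
    (E : Type*) [NormedAddCommGroup E] [NormedSpace ℂ E] [CompleteSpace E]
    (hfew : ∀ T : E →L[ℂ] E, ∃ (α : ℂ) (S : E →L[ℂ] E),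
      T = α • ContinuousLinearMap.id ℂ E + S ∧ IsSeparable (Set.range S))
    (n : ℕ) (hn : 0 < n)
    (T S : Fin n → (E →L[ℂ] E)) (α : Fin n → ℂ)
    (hdecomp : ∀ i, T i = α i • ContinuousLinearMap.id ℂ E + S i)
    (hSsep : ∀ i, IsSeparable (Set.range (S i)))
    (i₀ : Fin n) (hα : α i₀ ≠ 0)
    (F : Submodule ℂ E) (hF : F = (⨆ i, LinearMap.range (T i : E →ₗ[ℂ] E)).topologicalClosure) :
    F ⊔ (LinearMap.range (S i₀ : E →ₗ[ℂ] E)).topologicalClosure = ⊤ ∧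
      SeparableSpace (E ⧸ F) :=
  separable_quotient_of_nonzero_scalar_part_general E n T S α hdecomp hSsep i₀ hα F hF
end
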